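/- arXiv:2407.18707 — 7 statements merged into one kernel-verified Lean document; each statement's English description precedes it below -/
import Mathlib

section
/- Consider a feedforward stochastic neural network over a fixed input x ∈ ℝ^{n_0}: for k = 0,…,K let (W_k, b_k) ∼ p_{w_k} be independent random weight matrices and bias vectors, W_k ∈ ℝ^{n_{k+1}×n_k}, b_k ∈ ℝ^{n_{k+1}}, with E[‖W_k‖^ρ] < ∞ for ρ ∈ {1,2}, and let σ be a function on each ℝ^{n_k} with global Lipschitz constant L_σ. Define p_1 as the law of W_0 x + b_0, and for k = 1,…,K define p_{k+1} as the law of W_k σ(z) + b_k where z ∼ p_k is independent of (W_k, b_k). Define the approximating sequence by q_1 = p_1 and, for k = 1,…,K, let q'_k be any Borel probability measure on ℝ^{n_k} (the compression of q_k), let C_k ⊂ ℝ^{n_k} be a finite signature set with signature map Δ_{C_k}, and let q_{k+1} be the law of W_k σ(Δ_{C_k}(z̃)) + b_k where z̃ ∼ q'_k is independent of (W_k, b_k). Suppose Ŝ_k ≥ E[‖W_k‖^ρ]^{1/ρ}, Ŵ_{R,k} ≥ W_ρ(q_k, q'_k), and Ŵ_{Δ,k} ≥ W_ρ(σ#q'_k,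 σ#(Δ_{C_k}#q'_k)) for each k, and define Ŵ_1 = 0 and Ŵ_{k+1} = Ŝ_k ( L_σ (Ŵ_k + Ŵ_{R,k}) + Ŵ_{Δ,k} ). Then W_ρ(p_{K+1}, q_{K+1}) ≤ Ŵ_{K+1}. -/
open MeasureTheory
open scoped ENNReal NNReal

noncomputable instance clmMeasurableSpace {E F : Type*} [NormedAddCommGroup E]
    [NormedSpace ℝ E] [NormedAddCommGroup F] [NormedSpace ℝ F] :
    MeasurableSpace (E →L[ℝ] F) := borel _

/-- The `ρ`-Wasserstein distance between two Borel measures on a normed space,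
`W_ρ(p,q) = (inf_{γ ∈ Γ(p,q)} E_{(x,y)∼γ}[‖x−y‖^ρ])^{1/ρ}`. -/
noncomputable def Wp {E : Type*} [NormedAddCommGroup E] [MeasurableSpace E]
    (ρ : ℝ) (p q : Measure E) : ENNReal :=
  (⨅ γ ∈ {γ : Measure (E × E) | γ.map Prod.fst = p ∧ γ.map Prod.snd = q},
    ∫⁻ z, (‖z.1 - z.2‖₊ : ENNReal) ^ ρ ∂γ) ^ (1/ρ)

/-- `Δ` is a signature (Voronoi quantization) map for the finite set `C`:
it is measurable, takes values in `C`, and sends every point to a nearest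
location of `C`. -/
def IsSignatureMap {E : Type*} [NormedAddCommGroup E] [MeasurableSpace E]
    (C : Finset E) (Δ : E → E) : Prop :=
  Measurable Δ ∧ (∀ z, Δ z ∈ C) ∧ ∀ z, ∀ c ∈ C, ‖z - Δ z‖ ≤ ‖z - c‖

set_option maxHeartbeats 1000000
set_option synthInstance.maxHeartbeats 400000

namespace SNNAux

open ProbabilityTheory

noncomputable def Wcost {E : Type*} [NormedAddCommGroup E] [MeasurableSpace E] (ρ : ℝ)
    (γ : Measure (E × E)) : ℝ≥0∞ := ∫⁻ z, (‖z.1 - z.2‖₊ : ℝ≥0∞) ^ ρ ∂γ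

variable {E : Type*} [NormedAddCommGroup E] [MeasurableSpace E] [BorelSpace E]
  [SecondCountableTopology E] {ρ : ℝ}

lemma measurable_cost_integrand :
    Measurable fun z : E × E => (‖z.1 - z.2‖₊ : ℝ≥0∞) ^ ρ :=
  ((measurable_fst.sub measurable_snd).nnnorm.coe_nnreal_ennreal).pow_const ρ

lemma Wp_le_of_coupling (hρ0 : 0 < ρ) {p q : Measure E} {γ : Measure (E × E)}
    (h1 : γ.map Prod.fst = p) (h2 : γ.map Prod.snd = q) :
    Wp ρ p q ≤ (Wcost ρ γ) ^ (1/ρ) :=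
  ENNReal.rpow_le_rpow (iInf₂_le γ ⟨h1, h2⟩) (by positivity)

lemma Wp_eq (hρ0 : 0 < ρ) (p q : Measure E) :
    Wp ρ p q = ⨅ γ ∈ {γ : Measure (E × E) | γ.map Prod.fst = p ∧ γ.map Prod.snd = q},
      (Wcost ρ γ) ^ (1/ρ) := by
  have h1ρ : (0:ℝ) < 1/ρ := by positivity
  calc (⨅ γ ∈ {γ : Measure (E × E) | γ.map Prod.fst = p ∧ γ.map Prod.snd = q},
      Wcost ρ γ) ^ (1/ρ)
      = ENNReal.orderIsoRpow (1/ρ) h1ρ (⨅ γ ∈ {γ : Measure (E × E) |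
          γ.map Prod.fst = p ∧ γ.map Prod.snd = q}, Wcost ρ γ) := by
        simp only [ENNReal.orderIsoRpow_apply]
    _ = ⨅ γ ∈ {γ : Measure (E × E) | γ.map Prod.fst = p ∧ γ.map Prod.snd = q},
        ENNReal.orderIsoRpow (1/ρ) h1ρ (Wcost ρ γ) := by
        rw [OrderIso.map_iInf]
        exact iInf_congr fun γ => OrderIso.map_iInf _ _
    _ = _ := by simp only [ENNReal.orderIsoRpow_apply]

lemma Wp_self_le (hρ0 : 0 < ρ) (μ : Measure E) : Wp ρ μ μ ≤ 0 := by
  have hdiag : Measurable fun z : E => (z, z) := measurable_id.prodMk measurable_id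
  have h1 : (μ.map fun z : E => (z, z)).map Prod.fst = μ := by
    rw [Measure.map_map measurable_fst hdiag]
    exact Measure.map_id
  have h2 : (μ.map fun z : E => (z, z)).map Prod.snd = μ := by
    rw [Measure.map_map measurable_snd hdiag]
    exact Measure.map_id
  refine le_trans (Wp_le_of_coupling hρ0 h1 h2) ?_
  have : Wcost ρ ((μ.map fun z : E => (z, z))) = 0 := by
    rw [Wcost, lintegral_map measurable_cost_integrand hdiag]
    simp [sub_self, ENNReal.zero_rpow_of_pos hρ0]
  rw [this, ENNReal.zero_rpow_of_pos (by positivity)]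

lemma exists_coupling_le (hρ0 : 0 < ρ) (p q : Measure E)
    [IsProbabilityMeasure p] [IsProbabilityMeasure q] {ε : ℝ≥0∞} (hε : ε ≠ 0) :
    ∃ γ : Measure (E × E), (γ.map Prod.fst = p ∧ γ.map Prod.snd = q) ∧
      (Wcost ρ γ) ^ (1/ρ) ≤ Wp ρ p q + ε := by
  by_cases htop : Wp ρ p q = ⊤
  · refine ⟨p.prod q, ⟨?_, ?_⟩, by simp [htop]⟩
    · simp
    · simp
  · have hlt : Wp ρ p q < Wp ρ p q + ε := ENNReal.lt_add_right htop hε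
    conv_lhs at hlt => rw [Wp_eq hρ0]
    simp only [iInf_lt_iff] at hlt
    obtain ⟨γ, hγS, hγlt⟩ := hlt
    exact ⟨γ, hγS, hγlt.le⟩

lemma isProb_of_fst_eq {α β : Type*} [MeasurableSpace α] [MeasurableSpace β]
    {γ : Measure (α × β)} {p : Measure α} [IsProbabilityMeasure p]
    (h : γ.map Prod.fst = p) : IsProbabilityMeasure γ := by
  constructor
  rw [← Set.preimage_univ (f := @Prod.fst α β),
    ← Measure.map_apply measurable_fst MeasurableSet.univ, h]
  exact measure_univ

variable [StandardBorelSpace E] [Nonempty E]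

lemma glue_coupling (hρ1 : 1 ≤ ρ) {p q r : Measure E}
    {γ1 γ2 : Measure (E × E)}
    (h11 : γ1.map Prod.fst = p) (h12 : γ1.map Prod.snd = q)
    (h21 : γ2.map Prod.fst = q) (h22 : γ2.map Prod.snd = r)
    [IsProbabilityMeasure p] [IsProbabilityMeasure q] :
    ∃ γ : Measure (E × E), (γ.map Prod.fst = p ∧ γ.map Prod.snd = r) ∧
      (Wcost ρ γ) ^ (1/ρ) ≤ (Wcost ρ γ1) ^ (1/ρ) + (Wcost ρ γ2) ^ (1/ρ) := by
  have hρ0 : (0:ℝ) < ρ := lt_of_lt_of_le one_pos hρ1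
  haveI hγ1P : IsProbabilityMeasure γ1 := isProb_of_fst_eq h11
  haveI hγ2P : IsProbabilityMeasure γ2 := isProb_of_fst_eq h21
  set κ := γ2.condKernel with hκdef
  have hfst : γ2.fst = q := h21
  have hdis : q ⊗ₘ κ = γ2 := by
    rw [← hfst]; exact γ2.disintegrate _
  set κ' : Kernel (E × E) E := κ.comap Prod.snd measurable_snd with hκ'
  set m : Measure ((E × E) × E) := γ1 ⊗ₘ κ' with hm
  have hmfst : m.map Prod.fst = γ1 := Measure.fst_compProd γ1 κ'
  have mg : Measurable fun x : (E × E) × E => (x.1.1, x.2) :=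
    measurable_fst.fst.prodMk measurable_snd
  refine ⟨m.map (fun x => (x.1.1, x.2)), ⟨?_, ?_⟩, ?_⟩
  · rw [Measure.map_map measurable_fst mg]
    have hc : (Prod.fst ∘ fun x : (E × E) × E => (x.1.1, x.2))
        = (Prod.fst ∘ (Prod.fst : (E × E) × E → E × E)) := rfl
    rw [hc, ← Measure.map_map measurable_fst measurable_fst, hmfst, h11]
  · rw [Measure.map_map measurable_snd mg]
    have hc : (Prod.snd ∘ fun x : (E × E) × E => (x.1.1, x.2))
        = (Prod.snd : (E × E) × E → E) := rfl
    rw [hc]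
    ext s hs
    rw [Measure.map_apply measurable_snd hs, hm,
      Measure.compProd_apply (measurable_snd hs)]
    have hpre : ∀ ab : E × E, (Prod.mk ab ⁻¹' (Prod.snd ⁻¹' s) : Set E) = s :=
      fun ab => rfl
    simp only [hκ', Kernel.comap_apply, hpre]
    rw [← lintegral_map (κ.measurable_coe hs) measurable_snd, h12]
    rw [← h22, Measure.map_apply measurable_snd hs, ← hdis,
      Measure.compProd_apply (measurable_snd hs)]
    rfl
  · have h1 : Wcost ρ (m.map fun x : (E × E) × E => (x.1.1, x.2))
        = ∫⁻ x, (‖x.1.1 - x.2‖₊ : ℝ≥0∞) ^ ρ ∂m := by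
      rw [Wcost, lintegral_map measurable_cost_integrand mg]
    have hmono : (∫⁻ x, (‖x.1.1 - x.2‖₊ : ℝ≥0∞) ^ ρ ∂m)
        ≤ ∫⁻ x, ((‖x.1.1 - x.1.2‖₊ : ℝ≥0∞) + (‖x.1.2 - x.2‖₊ : ℝ≥0∞)) ^ ρ ∂m := by
      refine lintegral_mono fun x => ENNReal.rpow_le_rpow ?_ hρ0.le
      have h := nnnorm_add_le (x.1.1 - x.1.2) (x.1.2 - x.2)
      rw [sub_add_sub_cancel] at h
      exact_mod_cast h
    have hfm : Measurable fun x : (E × E) × E => (‖x.1.1 - x.1.2‖₊ : ℝ≥0∞) :=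
      (measurable_fst.fst.sub measurable_fst.snd).nnnorm.coe_nnreal_ennreal
    have hgm : Measurable fun x : (E × E) × E => (‖x.1.2 - x.2‖₊ : ℝ≥0∞) :=
      (measurable_fst.snd.sub measurable_snd).nnnorm.coe_nnreal_ennreal
    have hmink := ENNReal.lintegral_Lp_add_le (μ := m) hfm.aemeasurable hgm.aemeasurable hρ1
    have hI1 : (∫⁻ x, (‖x.1.1 - x.1.2‖₊ : ℝ≥0∞) ^ ρ ∂m) = Wcost ρ γ1 := by
      rw [Wcost, ← hmfst, lintegral_map measurable_cost_integrand measurable_fst]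
    have hI2 : (∫⁻ x, (‖x.1.2 - x.2‖₊ : ℝ≥0∞) ^ ρ ∂m) = Wcost ρ γ2 := by
      have hintm : Measurable fun x : (E × E) × E => (‖x.1.2 - x.2‖₊ : ℝ≥0∞) ^ ρ :=
        hgm.pow_const ρ
      rw [hm, Measure.lintegral_compProd hintm]
      simp only [hκ', Kernel.comap_apply]
      have hinner : Measurable fun b : E => ∫⁻ c, (‖b - c‖₊ : ℝ≥0∞) ^ ρ ∂(κ b) :=
        Measurable.lintegral_kernel_prod_right
          (f := fun b c => (‖b - c‖₊ : ℝ≥0∞) ^ ρ) measurable_cost_integrand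
      rw [← lintegral_map hinner measurable_snd, h12,
        ← Measure.lintegral_compProd measurable_cost_integrand, hdis, Wcost]
    rw [h1]
    calc (∫⁻ x, (‖x.1.1 - x.2‖₊ : ℝ≥0∞) ^ ρ ∂m) ^ (1/ρ)
        ≤ (∫⁻ x, ((‖x.1.1 - x.1.2‖₊ : ℝ≥0∞) + (‖x.1.2 - x.2‖₊ : ℝ≥0∞)) ^ ρ ∂m) ^ (1/ρ) :=
          ENNReal.rpow_le_rpow hmono (by positivity)
      _ ≤ (∫⁻ x, (‖x.1.1 - x.1.2‖₊ : ℝ≥0∞) ^ ρ ∂m) ^ (1/ρ)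
          + (∫⁻ x, (‖x.1.2 - x.2‖₊ : ℝ≥0∞) ^ ρ ∂m) ^ (1/ρ) := hmink
      _ = (Wcost ρ γ1) ^ (1/ρ) + (Wcost ρ γ2) ^ (1/ρ) := by rw [hI1, hI2]



lemma coupling_map_lip (hρ0 : 0 < ρ) {γ : Measure (E × E)} {L : ℝ≥0} {σ : E → E}
    (hσ : LipschitzWith L σ) :
    (Wcost ρ (γ.map (Prod.map σ σ))) ^ (1/ρ) ≤ (L : ℝ≥0∞) * (Wcost ρ γ) ^ (1/ρ) := by
  have hσm : Measurable σ := hσ.continuous.measurable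
  have h1 : Wcost ρ (γ.map (Prod.map σ σ)) ≤ (L : ℝ≥0∞) ^ ρ * Wcost ρ γ := by
    rw [Wcost, lintegral_map measurable_cost_integrand (hσm.prodMap hσm), Wcost,
      ← lintegral_const_mul _ measurable_cost_integrand]
    refine lintegral_mono fun z => ?_
    have hL : (‖σ z.1 - σ z.2‖₊ : ℝ≥0∞) ≤ (L : ℝ≥0∞) * (‖z.1 - z.2‖₊ : ℝ≥0∞) := by
      have := hσ z.1 z.2
      rw [edist_eq_enorm_sub, edist_eq_enorm_sub] at this
      exact this
    calc (‖(Prod.map σ σ z).1 - (Prod.map σ σ z).2‖₊ : ℝ≥0∞) ^ ρ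
        ≤ ((L : ℝ≥0∞) * (‖z.1 - z.2‖₊ : ℝ≥0∞)) ^ ρ := ENNReal.rpow_le_rpow hL hρ0.le
      _ = (L : ℝ≥0∞) ^ ρ * (‖z.1 - z.2‖₊ : ℝ≥0∞) ^ ρ :=
          ENNReal.mul_rpow_of_nonneg _ _ hρ0.le
  calc (Wcost ρ (γ.map (Prod.map σ σ))) ^ (1/ρ)
      ≤ ((L : ℝ≥0∞) ^ ρ * Wcost ρ γ) ^ (1/ρ) := ENNReal.rpow_le_rpow h1 (by positivity)
    _ = ((L : ℝ≥0∞) ^ ρ) ^ (1/ρ) * (Wcost ρ γ) ^ (1/ρ) :=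
        ENNReal.mul_rpow_of_nonneg _ _ (by positivity)
    _ = (L : ℝ≥0∞) * (Wcost ρ γ) ^ (1/ρ) := by
        rw [← ENNReal.rpow_mul, mul_one_div_cancel hρ0.ne', ENNReal.rpow_one]

lemma map_coupling_fst {p : Measure E} {γ : Measure (E × E)} {σ τ : E → E}
    (hσ : Measurable σ) (hτ : Measurable τ) (h1 : γ.map Prod.fst = p) :
    (γ.map (Prod.map σ τ)).map Prod.fst = p.map σ := by
  rw [Measure.map_map measurable_fst (hσ.prodMap hτ)]
  have hc : (Prod.fst ∘ Prod.map σ τ) = (σ ∘ Prod.fst) := rfl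
  rw [hc, ← Measure.map_map hσ measurable_fst, h1]

lemma map_coupling_snd {q : Measure E} {γ : Measure (E × E)} {σ τ : E → E}
    (hσ : Measurable σ) (hτ : Measurable τ) (h2 : γ.map Prod.snd = q) :
    (γ.map (Prod.map σ τ)).map Prod.snd = q.map τ := by
  rw [Measure.map_map measurable_snd (hσ.prodMap hτ)]
  have hc : (Prod.snd ∘ Prod.map σ τ) = (τ ∘ Prod.snd) := rfl
  rw [hc, ← Measure.map_map hτ measurable_snd, h2]

end SNNAux

section Step

open SNNAux

variable {E F : Type*}
  [NormedAddCommGroup E] [NormedSpace ℝ E] [MeasurableSpace E] [BorelSpace E]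
  [SecondCountableTopology E]
  [NormedAddCommGroup F] [NormedSpace ℝ F] [MeasurableSpace F] [BorelSpace F]
  [SecondCountableTopology F]
  [SecondCountableTopology (E →L[ℝ] F)]
  {ρ : ℝ}

lemma clm_borel : BorelSpace (E →L[ℝ] F) := ⟨rfl⟩

lemma measurable_eval : Measurable fun wu : (E →L[ℝ] F) × E => wu.1 wu.2 := by
  haveI := clm_borel (E := E) (F := F)
  exact isBoundedBilinearMap_apply.continuous.measurable

lemma measurable_netG :
    Measurable fun wbu : ((E →L[ℝ] F) × F) × E => wbu.1.1 wbu.2 + wbu.1.2 := by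
  haveI := clm_borel (E := E) (F := F)
  exact (measurable_eval.comp (measurable_fst.fst.prodMk measurable_snd)).add
    measurable_fst.snd

lemma net_push {α : Type*} [MeasurableSpace α]
    (μw : Measure ((E →L[ℝ] F) × F)) [SFinite μw] (ν : Measure α) [SFinite ν]
    {τ : α → E} (hτ : Measurable τ) :
    (μw.prod ν).map (fun wbz => wbz.1.1 (τ wbz.2) + wbz.1.2)
      = (μw.prod (ν.map τ)).map (fun wbu => wbu.1.1 wbu.2 + wbu.1.2) := by
  conv_rhs => rw [← Measure.map_id (μ := μw)]
  rw [Measure.map_prod_map _ _ measurable_id hτ,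
    Measure.map_map measurable_netG (measurable_id.prodMap hτ)]
  rfl



variable [StandardBorelSpace E] [Nonempty E]

lemma step_bound (hρ1 : 1 ≤ ρ)
    (pw : Measure ((E →L[ℝ] F) × F)) [IsProbabilityMeasure pw]
    (hSfin : (∫⁻ wb, (‖wb.1‖₊ : ℝ≥0∞) ^ ρ ∂pw) ≠ ⊤)
    (σ : E → E) (L : ℝ≥0) (hσ : LipschitzWith L σ)
    (Δ : E → E) (hΔm : Measurable Δ)
    (pk qk q'k : Measure E) [IsProbabilityMeasure pk] [IsProbabilityMeasure qk]
    [IsProbabilityMeasure q'k] :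
    Wp ρ ((pw.prod pk).map fun wbz => wbz.1.1 (σ wbz.2) + wbz.1.2)
      ((pw.prod q'k).map fun wbz => wbz.1.1 (σ (Δ wbz.2)) + wbz.1.2)
    ≤ (∫⁻ wb, (‖wb.1‖₊ : ℝ≥0∞) ^ ρ ∂pw) ^ (1/ρ) *
      ((L : ℝ≥0∞) * (Wp ρ pk qk + Wp ρ qk q'k) + Wp ρ (q'k.map σ) (q'k.map (σ ∘ Δ))) := by
  haveI := clm_borel (E := E) (F := F)
  have hρ0 : (0:ℝ) < ρ := lt_of_lt_of_le one_pos hρ1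
  have hσm : Measurable σ := hσ.continuous.measurable
  haveI : IsProbabilityMeasure (q'k.map σ) := Measure.isProbabilityMeasure_map hσm.aemeasurable
  haveI : IsProbabilityMeasure (q'k.map (σ ∘ Δ)) :=
    Measure.isProbabilityMeasure_map (hσm.comp hΔm).aemeasurable
  set I : ℝ≥0∞ := ∫⁻ wb, (‖wb.1‖₊ : ℝ≥0∞) ^ ρ ∂pw with hI
  set S : ℝ≥0∞ := I ^ (1/ρ) with hSdef
  have hSfin' : S ≠ ⊤ := ENNReal.rpow_ne_top_of_nonneg (by positivity) hSfin
  set A := Wp ρ pk qk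
  set B := Wp ρ qk q'k
  set Cc := Wp ρ (q'k.map σ) (q'k.map (σ ∘ Δ))
  refine ENNReal.le_of_forall_pos_le_add fun ε' hε' _ => ?_
  set D : ℝ≥0∞ := S * (2 * (L : ℝ≥0∞) + 1) + 1 with hD
  have hD0 : D ≠ 0 := by simp [hD]
  have hDtop : D ≠ ⊤ := by
    refine ENNReal.add_ne_top.mpr ⟨ENNReal.mul_ne_top hSfin' ?_, ENNReal.one_ne_top⟩
    exact ENNReal.add_ne_top.mpr ⟨ENNReal.mul_ne_top (by simp) ENNReal.coe_ne_top,
      ENNReal.one_ne_top⟩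
  set ε : ℝ≥0∞ := (ε' : ℝ≥0∞) / D with hεdef
  have hε0 : ε ≠ 0 :=
    (ENNReal.div_pos (by exact_mod_cast hε'.ne') hDtop).ne'
  -- pick near-optimal couplings
  obtain ⟨γ1, ⟨hγ11, hγ12⟩, hγ1c⟩ := exists_coupling_le hρ0 pk qk hε0
  obtain ⟨γ2, ⟨hγ21, hγ22⟩, hγ2c⟩ := exists_coupling_le hρ0 qk q'k hε0
  obtain ⟨γ3, ⟨hγ31, hγ32⟩, hγ3c⟩ :=
    exists_coupling_le hρ0 (q'k.map σ) (q'k.map (σ ∘ Δ)) hε0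
  -- glue γ1 and γ2
  obtain ⟨γ12, ⟨h121, h122⟩, h12c⟩ := glue_coupling hρ1 hγ11 hγ12 hγ21 hγ22
  -- push through σ × σ
  have hσ1 : (γ12.map (Prod.map σ σ)).map Prod.fst = pk.map σ :=
    map_coupling_fst hσm hσm h121
  have hσ2 : (γ12.map (Prod.map σ σ)).map Prod.snd = q'k.map σ :=
    map_coupling_snd hσm hσm h122
  haveI : IsProbabilityMeasure (pk.map σ) := Measure.isProbabilityMeasure_map hσm.aemeasurable
  -- glue with γ3
  obtain ⟨γ', ⟨h'1, h'2⟩, h'c⟩ := glue_coupling hρ1 hσ1 hσ2 hγ31 hγ32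
  haveI : IsProbabilityMeasure γ' := isProb_of_fst_eq h'1
  -- final coupling
  set F2 : ((E →L[ℝ] F) × F) × (E × E) → F × F :=
    fun wuv => (wuv.1.1 wuv.2.1 + wuv.1.2, wuv.1.1 wuv.2.2 + wuv.1.2) with hF2def
  have hF2 : Measurable F2 :=
    (measurable_netG.comp (measurable_fst.prodMk measurable_snd.fst)).prodMk
      (measurable_netG.comp (measurable_fst.prodMk measurable_snd.snd))
  set Γ : Measure (F × F) := (pw.prod γ').map F2 with hΓdef
  have hΓ1 : Γ.map Prod.fst = (pw.prod pk).map fun wbz => wbz.1.1 (σ wbz.2) + wbz.1.2 := by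
    rw [hΓdef, Measure.map_map measurable_fst hF2]
    have hc : (Prod.fst ∘ F2) = fun wbz : ((E →L[ℝ] F) × F) × (E × E) =>
        wbz.1.1 (wbz.2.1) + wbz.1.2 := rfl
    rw [hc]
    rw [net_push pw γ' measurable_fst, h'1, ← net_push pw pk hσm]
  have hΓ2 : Γ.map Prod.snd
      = (pw.prod q'k).map fun wbz => wbz.1.1 (σ (Δ wbz.2)) + wbz.1.2 := by
    rw [hΓdef, Measure.map_map measurable_snd hF2]
    have hc : (Prod.snd ∘ F2) = fun wbz : ((E →L[ℝ] F) × F) × (E × E) =>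
        wbz.1.1 (wbz.2.2) + wbz.1.2 := rfl
    rw [hc]
    rw [net_push pw γ' measurable_snd, h'2, ← net_push pw q'k (hσm.comp hΔm)]
    rfl
  -- cost of the final coupling
  have hΓcost : Wcost ρ Γ ≤ I * Wcost ρ γ' := by
    rw [hΓdef, Wcost, lintegral_map measurable_cost_integrand hF2]
    have hle : ∀ wuv : ((E →L[ℝ] F) × F) × (E × E),
        (‖(F2 wuv).1 - (F2 wuv).2‖₊ : ℝ≥0∞) ^ ρ
          ≤ (‖wuv.1.1‖₊ : ℝ≥0∞) ^ ρ * (‖wuv.2.1 - wuv.2.2‖₊ : ℝ≥0∞) ^ ρ := by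
      intro wuv
      have h1 : (F2 wuv).1 - (F2 wuv).2 = wuv.1.1 (wuv.2.1 - wuv.2.2) := by
        simp [hF2def, map_sub]
      rw [h1, ← ENNReal.mul_rpow_of_nonneg _ _ hρ0.le]
      refine ENNReal.rpow_le_rpow ?_ hρ0.le
      rw [← ENNReal.coe_mul]
      exact_mod_cast wuv.1.1.le_opNNNorm _
    calc (∫⁻ wuv, (‖(F2 wuv).1 - (F2 wuv).2‖₊ : ℝ≥0∞) ^ ρ ∂(pw.prod γ'))
        ≤ ∫⁻ wuv, (‖wuv.1.1‖₊ : ℝ≥0∞) ^ ρ * (‖wuv.2.1 - wuv.2.2‖₊ : ℝ≥0∞) ^ ρ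
            ∂(pw.prod γ') := lintegral_mono hle
      _ = I * Wcost ρ γ' := by
          rw [Wcost, hI]
          exact lintegral_prod_mul
            ((measurable_fst.nnnorm.coe_nnreal_ennreal.pow_const ρ).aemeasurable)
            measurable_cost_integrand.aemeasurable
  -- assemble
  have hWp : Wp ρ ((pw.prod pk).map fun wbz => wbz.1.1 (σ wbz.2) + wbz.1.2)
      ((pw.prod q'k).map fun wbz => wbz.1.1 (σ (Δ wbz.2)) + wbz.1.2)
      ≤ S * ((L : ℝ≥0∞) * ((A + ε) + (B + ε)) + (Cc + ε)) := by
    refine le_trans (Wp_le_of_coupling hρ0 hΓ1 hΓ2) ?_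
    calc (Wcost ρ Γ) ^ (1/ρ)
        ≤ (I * Wcost ρ γ') ^ (1/ρ) := ENNReal.rpow_le_rpow hΓcost (by positivity)
      _ = S * (Wcost ρ γ') ^ (1/ρ) := by
          rw [ENNReal.mul_rpow_of_nonneg _ _ (by positivity : (0:ℝ) ≤ 1/ρ), hSdef]
      _ ≤ S * ((L : ℝ≥0∞) * ((A + ε) + (B + ε)) + (Cc + ε)) := by
          refine mul_le_mul_right ?_ S
          refine le_trans h'c (add_le_add ?_ (le_trans hγ3c le_rfl))
          refine le_trans (coupling_map_lip hρ0 hσ) ?_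
          exact mul_le_mul_right (le_trans h12c (add_le_add hγ1c hγ2c)) _
  refine le_trans hWp ?_
  have hring : S * ((L : ℝ≥0∞) * ((A + ε) + (B + ε)) + (Cc + ε))
      = S * ((L : ℝ≥0∞) * (A + B) + Cc) + S * (2 * (L : ℝ≥0∞) + 1) * ε := by ring
  rw [hring]
  refine add_le_add le_rfl ?_
  calc S * (2 * (L : ℝ≥0∞) + 1) * ε ≤ D * ε := by
        refine mul_le_mul_left ?_ ε
        exact le_trans le_self_add le_rfl
    _ = ε' := by rw [hεdef, ENNReal.mul_div_cancel hD0 hDtop]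

end Step

/-- Wasserstein error bound between the output distribution of a stochastic
neural network over a fixed input point and its iteratively constructed
Gaussian-mixture-style approximation with compression and signature steps. -/
theorem snn_approximation_wasserstein_bound
    (ρ : ℝ) (hρ : ρ = 1 ∨ ρ = 2)
    (K : ℕ) (nn : ℕ → ℕ)
    (x : EuclideanSpace ℝ (Fin (nn 0)))
    -- the random weights (W_k, b_k) ∼ p_{w_k}, as linear maps ℝ^{n_k} → ℝ^{n_{k+1}}
    (pw : (k : ℕ) → Measure ((EuclideanSpace ℝ (Fin (nn k)) →L[ℝ]
      EuclideanSpace ℝ (Fin (nn (k+1)))) × EuclideanSpace ℝ (Fin (nn (k+1)))))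
    [hpw : ∀ k, IsProbabilityMeasure (pw k)]
    (hmom : ∀ k ≤ K, ∫⁻ wb, (‖wb.1‖₊ : ℝ≥0∞) ^ ρ ∂(pw k) < ⊤)
    -- the activation function on each layer, with global Lipschitz constant Lσ
    (σ : (k : ℕ) → EuclideanSpace ℝ (Fin (nn k)) → EuclideanSpace ℝ (Fin (nn k)))
    (Lσ : ℝ≥0) (hσ : ∀ k, LipschitzWith Lσ (σ k))
    -- the exact and approximating sequences of distributions
    (p q q' : (k : ℕ) → Measure (EuclideanSpace ℝ (Fin (nn k))))
    [hq' : ∀ k, IsProbabilityMeasure (q' k)]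
    (C : (k : ℕ) → Finset (EuclideanSpace ℝ (Fin (nn k))))
    (Δ : (k : ℕ) → EuclideanSpace ℝ (Fin (nn k)) → EuclideanSpace ℝ (Fin (nn k)))
    (hΔ : ∀ k, 1 ≤ k → k ≤ K → IsSignatureMap (C k) (Δ k))
    (hp1 : p 1 = (pw 0).map (fun wb => wb.1 x + wb.2))
    (hpk : ∀ k, 1 ≤ k → k ≤ K →
      p (k+1) = ((pw k).prod (p k)).map (fun wbz => wbz.1.1 (σ k wbz.2) + wbz.1.2))
    (hq1 : q 1 = p 1)
    (hqk : ∀ k, 1 ≤ k → k ≤ K →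
      q (k+1) = ((pw k).prod (q' k)).map
        (fun wbz => wbz.1.1 (σ k (Δ k wbz.2)) + wbz.1.2))
    -- the error bound terms
    (Shat WR WΔ What : ℕ → ℝ≥0∞)
    (hS : ∀ k ≤ K, (∫⁻ wb, (‖wb.1‖₊ : ℝ≥0∞) ^ ρ ∂(pw k)) ^ (1/ρ) ≤ Shat k)
    (hWR : ∀ k, 1 ≤ k → k ≤ K → Wp ρ (q k) (q' k) ≤ WR k)
    (hWΔ : ∀ k, 1 ≤ k → k ≤ K →
      Wp ρ ((q' k).map (σ k)) ((q' k).map (σ k ∘ Δ k)) ≤ WΔ k)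
    (hW1 : What 1 = 0)
    (hWrec : ∀ k, 1 ≤ k → k ≤ K →
      What (k+1) = Shat k * ((Lσ : ℝ≥0∞) * (What k + WR k) + WΔ k)) :
    Wp ρ (p (K+1)) (q (K+1)) ≤ What (K+1) := by
  have hρ1 : 1 ≤ ρ := by rcases hρ with h | h <;> rw [h] <;> norm_num
  have hρ0 : (0:ℝ) < ρ := lt_of_lt_of_le one_pos hρ1
  -- measurability of the network maps
  have hmeas1 : Measurable (fun wb : (EuclideanSpace ℝ (Fin (nn 0)) →L[ℝ]
      EuclideanSpace ℝ (Fin (nn 1))) × EuclideanSpace ℝ (Fin (nn 1)) =>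
      wb.1 x + wb.2) :=
    measurable_netG.comp (measurable_id.prodMk measurable_const)
  have hmeasp : ∀ k, Measurable (fun wbz : ((EuclideanSpace ℝ (Fin (nn k)) →L[ℝ]
      EuclideanSpace ℝ (Fin (nn (k+1)))) × EuclideanSpace ℝ (Fin (nn (k+1))))
      × EuclideanSpace ℝ (Fin (nn k)) => wbz.1.1 (σ k wbz.2) + wbz.1.2) := fun k =>
    measurable_netG.comp (measurable_fst.prodMk
      ((hσ k).continuous.measurable.comp measurable_snd))
  have hmeasq : ∀ k, 1 ≤ k → k ≤ K → Measurable
      (fun wbz : ((EuclideanSpace ℝ (Fin (nn k)) →L[ℝ]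
      EuclideanSpace ℝ (Fin (nn (k+1)))) × EuclideanSpace ℝ (Fin (nn (k+1))))
      × EuclideanSpace ℝ (Fin (nn k)) => wbz.1.1 (σ k (Δ k wbz.2)) + wbz.1.2) :=
    fun k h1 h2 => measurable_netG.comp (measurable_fst.prodMk
      (((hσ k).continuous.measurable.comp (hΔ k h1 h2).1).comp measurable_snd))
  have hprob : ∀ k, 1 ≤ k → k ≤ K + 1 →
      IsProbabilityMeasure (p k) ∧ IsProbabilityMeasure (q k) := by
    intro k hk1
    induction k, hk1 using Nat.le_induction with
    | base =>
      intro _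
      haveI := hpw 0
      rw [hq1, hp1]
      constructor <;> exact Measure.isProbabilityMeasure_map hmeas1.aemeasurable
    | succ k hk ih =>
      intro hsucc
      have hkK : k ≤ K := Nat.succ_le_succ_iff.mp hsucc
      obtain ⟨hpP, hqP⟩ := ih (hkK.trans (Nat.le_succ K))
      haveI := hpP; haveI := hqP; haveI := hq' k; haveI := hpw k
      rw [hpk k hk hkK, hqk k hk hkK]
      exact ⟨Measure.isProbabilityMeasure_map (hmeasp k).aemeasurable,
        Measure.isProbabilityMeasure_map (hmeasq k hk hkK).aemeasurable⟩
  have main : ∀ k, 1 ≤ k → k ≤ K + 1 → Wp ρ (p k) (q k) ≤ What k := by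
    intro k hk1
    induction k, hk1 using Nat.le_induction with
    | base =>
      intro _
      rw [hq1, hW1]
      exact SNNAux.Wp_self_le hρ0 (p 1)
    | succ k hk ih =>
      intro hsucc
      have hkK : k ≤ K := Nat.succ_le_succ_iff.mp hsucc
      have hkK1 : k ≤ K + 1 := hkK.trans (Nat.le_succ K)
      obtain ⟨hpP, hqP⟩ := hprob k hk hkK1
      haveI := hpP; haveI := hqP; haveI := hq' k; haveI := hpw k
      rw [hpk k hk hkK, hqk k hk hkK, hWrec k hk hkK]
      refine le_trans (step_bound hρ1 (pw k) (hmom k hkK).ne (σ k) Lσ (hσ k)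
        (Δ k) (hΔ k hk hkK).1 (p k) (q k) (q' k)) ?_
      exact mul_le_mul' (hS k hkK)
        (add_le_add (mul_le_mul' le_rfl (add_le_add (ih hkK1) (hWR k hk hkK)))
          (hWΔ k hk hkK))
  exact main (K+1) (Nat.le_add_left 1 K) le_rfl
end

section
/- (One-step inductive bound.) Let ρ ∈ {1,2}, let σ : ℝⁿ → ℝⁿ be Lipschitz with constant L_σ, and let p_w be a Borel probability distribution over pairs (W, b) ∈ ℝ^{m×n} × ℝ^m with E[‖W‖^ρ]^{1/ρ} ≤ Ŝ, where ‖·‖ is the spectral norm. Let p, q, q' be Borel probability measures on ℝⁿ with finite ρ-th moments such that W_ρ(p, q) ≤ Ŵ and W_ρ(q, q') ≤ Ŵ_R, and let C ⊂ ℝⁿ be a finite signature set with W_ρ(σ#q', σ#(Δ_C#q')) ≤ Ŵ_Δ. Let P be the law of W σ(z) + b where z ∼ p is independent of (W,b) ∼ p_w, and let Q be the law of W σ(Δ_C(z̃)) + b where z̃ ∼ q' is independent of (W,b) ∼ p_w. Then W_ρ(P, Q) ≤ Ŝ ( L_σ (Ŵ + Ŵ_R) + Ŵ_Δ ). -/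
open MeasureTheory
open scoped ENNReal NNReal

set_option synthInstance.maxSize 512
set_option synthInstance.maxHeartbeats 1000000
set_option maxHeartbeats 1600000

instance clmBorelSpace {E F : Type*} [NormedAddCommGroup E]
    [NormedSpace ℝ E] [NormedAddCommGroup F] [NormedSpace ℝ F] :
    BorelSpace (E →L[ℝ] F) := ⟨rfl⟩

section Aux

variable {E : Type*} [NormedAddCommGroup E] [MeasurableSpace E]

lemma wp_le_coupling {ρ : ℝ} (hρ : 0 ≤ ρ)
    {p q : Measure E} (γ : Measure (E × E)) (h1 : γ.map Prod.fst = p)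
    (h2 : γ.map Prod.snd = q) :
    Wp ρ p q ≤ (∫⁻ z, (‖z.1 - z.2‖₊ : ℝ≥0∞) ^ ρ ∂γ) ^ (1/ρ) :=
  ENNReal.rpow_le_rpow (iInf₂_le γ ⟨h1, h2⟩) (by positivity)

lemma exists_coupling_of_wp_le {ρ : ℝ} (hρ : 0 < ρ) {p q : Measure E} {W : ℝ≥0∞}
    (hW : Wp ρ p q ≤ W) (hWfin : W ≠ ⊤) {ε : ℝ≥0∞} (hε : 0 < ε) :
    ∃ γ : Measure (E × E), γ.map Prod.fst = p ∧ γ.map Prod.snd = q ∧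
      (∫⁻ z, (‖z.1 - z.2‖₊ : ℝ≥0∞) ^ ρ ∂γ) ^ (1/ρ) ≤ W + ε := by
  set I := ⨅ γ ∈ {γ : Measure (E × E) | γ.map Prod.fst = p ∧ γ.map Prod.snd = q},
    ∫⁻ z, (‖z.1 - z.2‖₊ : ℝ≥0∞) ^ ρ ∂γ with hIdef
  have hI : I ^ (1/ρ) ≤ W := hW
  have hIle : I ≤ W ^ ρ := by
    have := ENNReal.rpow_le_rpow hI hρ.le
    rwa [← ENNReal.rpow_mul, one_div, inv_mul_cancel₀ hρ.ne', ENNReal.rpow_one] at this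
  have hlt : I < (W + ε) ^ ρ :=
    lt_of_le_of_lt hIle (ENNReal.rpow_lt_rpow (ENNReal.lt_add_right hWfin hε.ne') hρ)
  rw [hIdef, iInf_lt_iff] at hlt
  obtain ⟨γ, hγ⟩ := hlt
  rw [iInf_lt_iff] at hγ
  obtain ⟨hγmem, hγlt⟩ := hγ
  refine ⟨γ, hγmem.1, hγmem.2, ?_⟩
  have := ENNReal.rpow_le_rpow hγlt.le (by positivity : (0:ℝ) ≤ 1/ρ)
  rwa [← ENNReal.rpow_mul, mul_one_div_cancel hρ.ne', ENNReal.rpow_one] at this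

lemma wp_self_eq_zero [BorelSpace E] [SecondCountableTopology E]
    {ρ : ℝ} (hρ : 0 < ρ) (μ : Measure E) :
    Wp ρ μ μ = 0 := by
  have hdiag : Measurable fun x : E => (x, x) := measurable_id.prodMk measurable_id
  have h1 : (μ.map fun x : E => (x, x)).map Prod.fst = μ := by
    rw [Measure.map_map measurable_fst hdiag]; exact Measure.map_id
  have h2 : (μ.map fun x : E => (x, x)).map Prod.snd = μ := by
    rw [Measure.map_map measurable_snd hdiag]; exact Measure.map_id
  have hcost : (∫⁻ z, (‖z.1 - z.2‖₊ : ℝ≥0∞) ^ ρ ∂(μ.map fun x : E => (x, x))) = 0 := by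
    rw [lintegral_map (f := fun z : E × E => (‖z.1 - z.2‖₊ : ℝ≥0∞) ^ ρ) (((continuous_fst.sub continuous_snd).measurable.nnnorm.coe_nnreal_ennreal).pow_const ρ) hdiag]
    simp [ENNReal.zero_rpow_of_pos hρ]
  have := wp_le_coupling hρ.le (μ.map fun x : E => (x, x)) h1 h2
  rw [hcost] at this
  rw [ENNReal.zero_rpow_of_pos (by positivity : (0:ℝ) < 1/ρ)] at this
  exact le_zero_iff.mp this

end Aux

section Glue

open ProbabilityTheory

variable {α β γ' : Type*} [MeasurableSpace α] [MeasurableSpace β] [MeasurableSpace γ']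

lemma map_compProd_comap (μ : Measure α) [SFinite μ] {f : α → β} (hf : Measurable f)
    [SFinite (μ.map f)]
    (κ : Kernel β γ') [IsSFiniteKernel κ] :
    (μ ⊗ₘ κ.comap f hf).map (fun t => (f t.1, t.2)) = (μ.map f) ⊗ₘ κ := by
  have hg : Measurable fun t : α × γ' => (f t.1, t.2) :=
    (hf.comp measurable_fst).prodMk measurable_snd
  ext s hs
  rw [Measure.map_apply hg hs, Measure.compProd_apply (hg hs), Measure.compProd_apply hs,
    lintegral_map (Kernel.measurable_kernel_prodMk_left hs) hf]
  refine lintegral_congr fun a => ?_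
  rw [Kernel.comap_apply]
  rfl

end Glue

section WpZero

open Metric

variable {E : Type*} [NormedAddCommGroup E] [MeasurableSpace E] [BorelSpace E]
  [SecondCountableTopology E]

lemma closed_le_of_couplings {ρ : ℝ} (hρ : 0 < ρ) {μ ν : Measure E}
    [IsProbabilityMeasure μ] [IsProbabilityMeasure ν]
    (h : ∀ c : ℝ≥0∞, 0 < c → ∃ γ : Measure (E × E), γ.map Prod.fst = μ ∧
      γ.map Prod.snd = ν ∧ ∫⁻ z, (‖z.1 - z.2‖₊ : ℝ≥0∞) ^ ρ ∂γ < c)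
    {F : Set E} (hF : IsClosed F) : μ F ≤ ν F := by
  have step : ∀ ε : ℝ, 0 < ε → μ F ≤ ν (thickening ε F) := by
    intro ε hε
    have hεpow : (0:ℝ≥0∞) < ENNReal.ofReal ε ^ ρ := by
      apply ENNReal.rpow_pos (by simpa using hε)
      exact (ENNReal.ofReal_lt_top).ne
    refine ENNReal.le_of_forall_pos_le_add fun δ hδ _ => ?_
    obtain ⟨γ, hγ1, hγ2, hγc⟩ := h (ENNReal.ofReal ε ^ ρ * δ)
      (ENNReal.mul_pos hεpow.ne' (ENNReal.coe_pos.mpr hδ).ne')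
    haveI : IsFiniteMeasure γ := by
      constructor
      have : γ Set.univ = (γ.map Prod.fst) Set.univ := by
        rw [Measure.map_apply measurable_fst MeasurableSet.univ]; rfl
      rw [this, hγ1]; simp
    have hsub : Prod.fst ⁻¹' F ⊆ (Prod.snd ⁻¹' thickening ε F) ∪
        {t : E × E | ENNReal.ofReal ε ^ ρ ≤ (‖t.1 - t.2‖₊ : ℝ≥0∞) ^ ρ} := by
      rintro ⟨x, y⟩ hx
      by_cases hd : ‖x - y‖ < ε
      · left
        exact mem_thickening_iff.mpr ⟨x, hx, by simpa [dist_eq_norm, norm_sub_rev] using hd⟩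
      · right
        push_neg at hd
        refine ENNReal.rpow_le_rpow ?_ hρ.le
        rw [← ENNReal.ofReal_coe_nnreal, coe_nnnorm]
        exact ENNReal.ofReal_le_ofReal hd
    have hcheb : γ {t : E × E | ENNReal.ofReal ε ^ ρ ≤ (‖t.1 - t.2‖₊ : ℝ≥0∞) ^ ρ} ≤ δ := by
      have hmeas : Measurable fun t : E × E => (‖t.1 - t.2‖₊ : ℝ≥0∞) ^ ρ :=
        ((continuous_fst.sub continuous_snd).measurable.nnnorm.coe_nnreal_ennreal).pow_const ρ
      have := mul_meas_ge_le_lintegral (μ := γ) hmeas (ENNReal.ofReal ε ^ ρ)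
      have hlt : ENNReal.ofReal ε ^ ρ *
          γ {t : E × E | ENNReal.ofReal ε ^ ρ ≤ (‖t.1 - t.2‖₊ : ℝ≥0∞) ^ ρ} <
          ENNReal.ofReal ε ^ ρ * δ := lt_of_le_of_lt this hγc
      exact le_of_lt ((ENNReal.mul_lt_mul_iff_right hεpow.ne'
        (ENNReal.rpow_lt_top_of_nonneg hρ.le ENNReal.ofReal_lt_top.ne).ne).mp hlt)
    calc μ F = γ (Prod.fst ⁻¹' F) := by
          rw [← hγ1, Measure.map_apply measurable_fst hF.measurableSet]
      _ ≤ γ (Prod.snd ⁻¹' thickening ε F) +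
            γ {t : E × E | ENNReal.ofReal ε ^ ρ ≤ (‖t.1 - t.2‖₊ : ℝ≥0∞) ^ ρ} :=
          le_trans (measure_mono hsub) (measure_union_le _ _)
      _ ≤ ν (thickening ε F) + δ := by
          gcongr
          rw [← hγ2, Measure.map_apply measurable_snd isOpen_thickening.measurableSet]
  have htend := tendsto_measure_thickening (μ := ν) (s := F) ⟨1, one_pos, measure_ne_top ν _⟩
  rw [hF.closure_eq] at htend
  exact ge_of_tendsto htend (eventually_nhdsWithin_of_forall fun r hr => step r hr)

lemma eq_of_wp_eq_zero {ρ : ℝ} (hρ : 0 < ρ) {μ ν : Measure E}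
    [IsProbabilityMeasure μ] [IsProbabilityMeasure ν]
    (h : Wp ρ μ ν = 0) : μ = ν := by
  have hI : (⨅ γ ∈ {γ : Measure (E × E) | γ.map Prod.fst = μ ∧ γ.map Prod.snd = ν},
      ∫⁻ z, (‖z.1 - z.2‖₊ : ℝ≥0∞) ^ ρ ∂γ) = 0 := by
    have := (ENNReal.rpow_eq_zero_iff).mp h
    rcases this with ⟨h0, _⟩ | ⟨_, hneg⟩
    · exact h0
    · exfalso; have : (0:ℝ) < 1/ρ := by positivity
      linarith
  have hex : ∀ c : ℝ≥0∞, 0 < c → ∃ γ : Measure (E × E), γ.map Prod.fst = μ ∧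
      γ.map Prod.snd = ν ∧ ∫⁻ z, (‖z.1 - z.2‖₊ : ℝ≥0∞) ^ ρ ∂γ < c := by
    intro c hc
    have : (⨅ γ ∈ {γ : Measure (E × E) | γ.map Prod.fst = μ ∧ γ.map Prod.snd = ν},
        ∫⁻ z, (‖z.1 - z.2‖₊ : ℝ≥0∞) ^ ρ ∂γ) < c := by rw [hI]; exact hc
    rw [iInf_lt_iff] at this
    obtain ⟨γ, hγ⟩ := this
    rw [iInf_lt_iff] at hγ
    obtain ⟨hmem, hlt⟩ := hγ
    exact ⟨γ, hmem.1, hmem.2, hlt⟩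
  have hex' : ∀ c : ℝ≥0∞, 0 < c → ∃ γ : Measure (E × E), γ.map Prod.fst = ν ∧
      γ.map Prod.snd = μ ∧ ∫⁻ z, (‖z.1 - z.2‖₊ : ℝ≥0∞) ^ ρ ∂γ < c := by
    intro c hc
    obtain ⟨γ, h1, h2, hcost⟩ := hex c hc
    refine ⟨γ.map Prod.swap, ?_, ?_, ?_⟩
    · rw [Measure.map_map measurable_fst measurable_swap]; exact h2
    · rw [Measure.map_map measurable_snd measurable_swap]; exact h1
    · rw [lintegral_map (f := fun z : E × E => (‖z.1 - z.2‖₊ : ℝ≥0∞) ^ ρ) (((continuous_fst.sub continuous_snd).measurable.nnnorm.coe_nnreal_ennreal).pow_const ρ)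
        measurable_swap]
      calc ∫⁻ (a : E × E), (‖a.2 - a.1‖₊ : ℝ≥0∞) ^ ρ ∂γ
          = ∫⁻ (a : E × E), (‖a.1 - a.2‖₊ : ℝ≥0∞) ^ ρ ∂γ := by
            refine lintegral_congr fun a => ?_
            rw [← nnnorm_neg, neg_sub]
        _ < c := hcost
  have hle1 : ∀ F : Set E, IsClosed F → μ F ≤ ν F := fun F hF =>
    closed_le_of_couplings hρ hex hF
  have hle2 : ∀ F : Set E, IsClosed F → ν F ≤ μ F := fun F hF =>
    closed_le_of_couplings hρ hex' hF
  refine ext_of_generate_finite {s : Set E | IsClosed s} ?_ ?_ (fun s hs => le_antisymm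
    (hle1 s hs) (hle2 s hs)) (by simp)
  · rw [BorelSpace.measurable_eq (α := E), borel_eq_generateFrom_isClosed]
  · exact fun s hs t ht _ => hs.inter ht

end WpZero

section Key

open ProbabilityTheory

lemma prob_of_coupling {E : Type*} [MeasurableSpace E] {γ : Measure (E × E)} {μ : Measure E}
    [IsProbabilityMeasure μ] (h : γ.map Prod.fst = μ) : IsProbabilityMeasure γ := by
  constructor
  have h2 : γ Set.univ = μ Set.univ := by
    rw [← h, Measure.map_apply measurable_fst MeasurableSet.univ, Set.preimage_univ]
  rw [h2, measure_univ]

lemma key_bound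
    (ρ : ℝ) (hρ1 : 1 ≤ ρ) (n m : ℕ)
    (pw : Measure ((EuclideanSpace ℝ (Fin n) →L[ℝ] EuclideanSpace ℝ (Fin m)) ×
      EuclideanSpace ℝ (Fin m)))
    [IsProbabilityMeasure pw]
    (σ : EuclideanSpace ℝ (Fin n) → EuclideanSpace ℝ (Fin n))
    (Lσ : ℝ≥0) (hσ : LipschitzWith Lσ σ)
    (p q q' : Measure (EuclideanSpace ℝ (Fin n)))
    [IsProbabilityMeasure p] [IsProbabilityMeasure q] [IsProbabilityMeasure q']
    (Δ : EuclideanSpace ℝ (Fin n) → EuclideanSpace ℝ (Fin n)) (hΔm : Measurable Δ)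
    (γ1 γ2 γ3 : Measure (EuclideanSpace ℝ (Fin n) × EuclideanSpace ℝ (Fin n)))
    (h11 : γ1.map Prod.fst = p) (h12 : γ1.map Prod.snd = q)
    (h21 : γ2.map Prod.fst = q) (h22 : γ2.map Prod.snd = q')
    (h31 : γ3.map Prod.fst = q'.map σ) (h32 : γ3.map Prod.snd = q'.map (σ ∘ Δ)) :
    Wp ρ ((pw.prod p).map (fun wbz => wbz.1.1 (σ wbz.2) + wbz.1.2))
       ((pw.prod q').map (fun wbz => wbz.1.1 (σ (Δ wbz.2)) + wbz.1.2)) ≤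
    (∫⁻ wb, (‖wb.1‖₊ : ℝ≥0∞) ^ ρ ∂pw) ^ (1/ρ) *
      ((Lσ : ℝ≥0∞) * ((∫⁻ z, (‖z.1 - z.2‖₊ : ℝ≥0∞) ^ ρ ∂γ1) ^ (1/ρ)
        + (∫⁻ z, (‖z.1 - z.2‖₊ : ℝ≥0∞) ^ ρ ∂γ2) ^ (1/ρ))
        + (∫⁻ z, (‖z.1 - z.2‖₊ : ℝ≥0∞) ^ ρ ∂γ3) ^ (1/ρ)) := by
  have hρ0 : (0:ℝ) < ρ := lt_of_lt_of_le zero_lt_one hρ1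
  have h1ρ : (0:ℝ) ≤ 1/ρ := by positivity
  have hσm : Measurable σ := hσ.continuous.measurable
  haveI : IsProbabilityMeasure γ1 := prob_of_coupling h11
  haveI : IsProbabilityMeasure γ2 := prob_of_coupling h21
  haveI : IsProbabilityMeasure (q'.map σ) := Measure.isProbabilityMeasure_map hσm.aemeasurable
  haveI : IsProbabilityMeasure γ3 := prob_of_coupling h31
  set κ2 := γ2.condKernel with hκ2
  set κ3 := γ3.condKernel with hκ3
  set γ12 : Measure ((EuclideanSpace ℝ (Fin n) × EuclideanSpace ℝ (Fin n)) ×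
      EuclideanSpace ℝ (Fin n)) := γ1 ⊗ₘ (κ2.comap Prod.snd measurable_snd) with hγ12
  have hgm : Measurable fun t : (EuclideanSpace ℝ (Fin n) × EuclideanSpace ℝ (Fin n)) ×
      EuclideanSpace ℝ (Fin n) => σ t.2 := hσm.comp measurable_snd
  set η := γ12 ⊗ₘ (κ3.comap _ hgm) with hη
  -- marginals of γ12
  have hfst12 : γ12.map Prod.fst = γ1 := Measure.fst_compProd _ _
  haveI : SFinite (γ1.map Prod.snd) := by rw [h12]; infer_instance
  have hmid : γ12.map (fun t => (t.1.2, t.2)) = γ2 := by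
    have h := map_compProd_comap γ1 measurable_snd κ2
    rw [h12] at h
    rw [hγ12, h]
    have hfq : γ2.fst = q := h21
    rw [← hfq]
    exact γ2.disintegrate γ2.condKernel
  have hmidm : Measurable fun t : (EuclideanSpace ℝ (Fin n) × EuclideanSpace ℝ (Fin n)) ×
      EuclideanSpace ℝ (Fin n) => (t.1.2, t.2) :=
    ((measurable_fst.snd).prodMk measurable_snd)
  have hsnd12 : γ12.map Prod.snd = q' := by
    have h := congrArg (fun ν : Measure (EuclideanSpace ℝ (Fin n) × EuclideanSpace ℝ (Fin n)) =>
      ν.map Prod.snd) hmid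
    rwa [Measure.map_map measurable_snd hmidm, h22] at h
  -- marginals of η
  have hηfst : η.map Prod.fst = γ12 := Measure.fst_compProd _ _
  have hmapg : γ12.map (fun t => σ t.2) = q'.map σ := by
    rw [show (fun t : (EuclideanSpace ℝ (Fin n) × EuclideanSpace ℝ (Fin n)) ×
      EuclideanSpace ℝ (Fin n) => σ t.2) = σ ∘ Prod.snd from rfl,
      ← Measure.map_map hσm measurable_snd, hsnd12]
  haveI : SFinite (γ12.map fun t => σ t.2) := by rw [hmapg]; infer_instance
  have hπ3 : η.map (fun t => (σ t.1.2, t.2)) = γ3 := by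
    have h := map_compProd_comap γ12 hgm κ3
    rw [hmapg] at h
    rw [hη, h]
    have hfq : γ3.fst = q'.map σ := h31
    rw [← hfq]
    exact γ3.disintegrate γ3.condKernel
  have hg3m : Measurable fun t : ((EuclideanSpace ℝ (Fin n) × EuclideanSpace ℝ (Fin n)) ×
      EuclideanSpace ℝ (Fin n)) × EuclideanSpace ℝ (Fin n) => (σ t.1.2, t.2) :=
    (hσm.comp (measurable_fst.snd)).prodMk measurable_snd
  have hηsnd : η.map Prod.snd = q'.map (σ ∘ Δ) := by
    have h := congrArg (fun ν : Measure (EuclideanSpace ℝ (Fin n) × EuclideanSpace ℝ (Fin n)) =>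
      ν.map Prod.snd) hπ3
    rwa [Measure.map_map measurable_snd hg3m, h32] at h
  have hπ1 : η.map (fun t => t.1.1) = γ1 := by
    have h := congrArg (fun ν : Measure ((EuclideanSpace ℝ (Fin n) ×
      EuclideanSpace ℝ (Fin n)) × EuclideanSpace ℝ (Fin n)) => ν.map Prod.fst) hηfst
    rwa [Measure.map_map measurable_fst measurable_fst, hfst12] at h
  have hπ2 : η.map (fun t => (t.1.1.2, t.1.2)) = γ2 := by
    have h := congrArg (fun ν : Measure ((EuclideanSpace ℝ (Fin n) ×
      EuclideanSpace ℝ (Fin n)) × EuclideanSpace ℝ (Fin n)) =>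
      ν.map (fun s => (s.1.2, s.2))) hηfst
    rwa [Measure.map_map hmidm measurable_fst, hmid] at h
  -- the coupling of P and Q
  have happ : Continuous fun s : (EuclideanSpace ℝ (Fin n) →L[ℝ] EuclideanSpace ℝ (Fin m)) ×
      EuclideanSpace ℝ (Fin n) => s.1 s.2 := isBoundedBilinearMap_apply.continuous
  set F : (((EuclideanSpace ℝ (Fin n) →L[ℝ] EuclideanSpace ℝ (Fin m)) ×
      EuclideanSpace ℝ (Fin m)) × (((EuclideanSpace ℝ (Fin n) × EuclideanSpace ℝ (Fin n)) ×
      EuclideanSpace ℝ (Fin n)) × EuclideanSpace ℝ (Fin n))) →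
      EuclideanSpace ℝ (Fin m) × EuclideanSpace ℝ (Fin m) :=
    fun ωt => (ωt.1.1 (σ ωt.2.1.1.1) + ωt.1.2, ωt.1.1 ωt.2.2 + ωt.1.2) with hFdef
  have hcb : Continuous fun ωt : ((EuclideanSpace ℝ (Fin n) →L[ℝ] EuclideanSpace ℝ (Fin m)) ×
      EuclideanSpace ℝ (Fin m)) × (((EuclideanSpace ℝ (Fin n) × EuclideanSpace ℝ (Fin n)) ×
      EuclideanSpace ℝ (Fin n)) × EuclideanSpace ℝ (Fin n)) => ωt.1.2 :=
    continuous_snd.comp continuous_fst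
  have hc1 : Continuous fun ωt : ((EuclideanSpace ℝ (Fin n) →L[ℝ] EuclideanSpace ℝ (Fin m)) ×
      EuclideanSpace ℝ (Fin m)) × (((EuclideanSpace ℝ (Fin n) × EuclideanSpace ℝ (Fin n)) ×
      EuclideanSpace ℝ (Fin n)) × EuclideanSpace ℝ (Fin n)) => ωt.1.1 (σ ωt.2.1.1.1) :=
    happ.comp ((continuous_fst.comp continuous_fst).prodMk
      (hσ.continuous.comp (continuous_fst.comp (continuous_fst.comp
        (continuous_fst.comp continuous_snd)))))
  have hc2 : Continuous fun ωt : ((EuclideanSpace ℝ (Fin n) →L[ℝ] EuclideanSpace ℝ (Fin m)) ×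
      EuclideanSpace ℝ (Fin m)) × (((EuclideanSpace ℝ (Fin n) × EuclideanSpace ℝ (Fin n)) ×
      EuclideanSpace ℝ (Fin n)) × EuclideanSpace ℝ (Fin n)) => ωt.1.1 ωt.2.2 :=
    happ.comp ((continuous_fst.comp continuous_fst).prodMk
      (continuous_snd.comp continuous_snd))
  have hFc : Continuous F := (hc1.add hcb).prodMk (hc2.add hcb)
  have hFm : Measurable F := hFc.measurable
  set Γ := (pw.prod η).map F with hΓ
  -- first marginal of Γ
  have h1m : Measurable fun t : ((EuclideanSpace ℝ (Fin n) × EuclideanSpace ℝ (Fin n)) ×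
      EuclideanSpace ℝ (Fin n)) × EuclideanSpace ℝ (Fin n) => t.1.1.1 :=
    (measurable_fst.comp (measurable_fst.comp measurable_fst) :)
  have hη1 : η.map (fun t => t.1.1.1) = p := by
    have h := congrArg (fun ν : Measure (EuclideanSpace ℝ (Fin n) ×
      EuclideanSpace ℝ (Fin n)) => ν.map Prod.fst) hπ1
    rwa [Measure.map_map measurable_fst
      (show Measurable fun t : ((EuclideanSpace ℝ (Fin n) × EuclideanSpace ℝ (Fin n)) ×
        EuclideanSpace ℝ (Fin n)) × EuclideanSpace ℝ (Fin n) => t.1.1 from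
        measurable_fst.comp measurable_fst), h11] at h
  have hfmeas : Measurable fun wbz : ((EuclideanSpace ℝ (Fin n) →L[ℝ]
      EuclideanSpace ℝ (Fin m)) × EuclideanSpace ℝ (Fin m)) × EuclideanSpace ℝ (Fin n) =>
      wbz.1.1 (σ wbz.2) + wbz.1.2 :=
    ((happ.comp ((continuous_fst.comp continuous_fst).prodMk
      (hσ.continuous.comp continuous_snd))).add
      (continuous_snd.comp continuous_fst)).measurable
  have hΓ1 : Γ.map Prod.fst = (pw.prod p).map (fun wbz => wbz.1.1 (σ wbz.2) + wbz.1.2) := by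
    have hpp : pw.prod p = (pw.prod η).map (Prod.map id fun t => t.1.1.1) := by
      have h := Measure.map_prod_map (f := id) pw η measurable_id h1m
      rw [Measure.map_id, hη1] at h
      exact h
    rw [hΓ, Measure.map_map measurable_fst hFm, hpp,
      Measure.map_map hfmeas (measurable_id.prodMap h1m)]
    rfl
  -- second marginal of Γ
  have hf'meas : Measurable fun wbz : ((EuclideanSpace ℝ (Fin n) →L[ℝ]
      EuclideanSpace ℝ (Fin m)) × EuclideanSpace ℝ (Fin m)) × EuclideanSpace ℝ (Fin n) =>
      wbz.1.1 wbz.2 + wbz.1.2 :=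
    ((happ.comp ((continuous_fst.comp continuous_fst).prodMk continuous_snd)).add
      (continuous_snd.comp continuous_fst)).measurable
  have hΓ2 : Γ.map Prod.snd =
      (pw.prod q').map (fun wbz => wbz.1.1 (σ (Δ wbz.2)) + wbz.1.2) := by
    have hps : pw.prod (q'.map (σ ∘ Δ)) = (pw.prod η).map (Prod.map id Prod.snd) := by
      have h := Measure.map_prod_map (f := id) pw η measurable_id measurable_snd
      rw [Measure.map_id, hηsnd] at h
      exact h
    have hq'map : pw.prod (q'.map (σ ∘ Δ)) = (pw.prod q').map (Prod.map id (σ ∘ Δ)) := by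
      have h := Measure.map_prod_map (f := id) pw q' measurable_id (hσm.comp hΔm)
      rw [Measure.map_id] at h
      exact h
    have e1 : Γ.map Prod.snd =
        (pw.prod (q'.map (σ ∘ Δ))).map (fun wbz => wbz.1.1 wbz.2 + wbz.1.2) := by
      rw [hΓ, Measure.map_map measurable_snd hFm, hps,
        Measure.map_map hf'meas (measurable_id.prodMap measurable_snd)]
      rfl
    rw [e1, hq'map, Measure.map_map hf'meas (measurable_id.prodMap (hσm.comp hΔm))]
    rfl
  -- cost of Γ
  have hnormmeas : Measurable fun z : EuclideanSpace ℝ (Fin m) × EuclideanSpace ℝ (Fin m) =>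
      (‖z.1 - z.2‖₊ : ℝ≥0∞) ^ ρ :=
    ((continuous_fst.sub continuous_snd).measurable.nnnorm.coe_nnreal_ennreal).pow_const ρ
  have hnormmeasX : Measurable fun z : EuclideanSpace ℝ (Fin n) × EuclideanSpace ℝ (Fin n) =>
      (‖z.1 - z.2‖₊ : ℝ≥0∞) ^ ρ :=
    ((continuous_fst.sub continuous_snd).measurable.nnnorm.coe_nnreal_ennreal).pow_const ρ
  have hcostΓ : ∫⁻ z, (‖z.1 - z.2‖₊ : ℝ≥0∞) ^ ρ ∂Γ =
      ∫⁻ ωt, (‖(F ωt).1 - (F ωt).2‖₊ : ℝ≥0∞) ^ ρ ∂(pw.prod η) := by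
    rw [hΓ, lintegral_map hnormmeas hFm]
  have hpoint : ∀ ωt, (‖(F ωt).1 - (F ωt).2‖₊ : ℝ≥0∞) ^ ρ ≤
      (‖ωt.1.1‖₊ : ℝ≥0∞) ^ ρ * (‖σ ωt.2.1.1.1 - ωt.2.2‖₊ : ℝ≥0∞) ^ ρ := by
    intro ωt
    rw [← ENNReal.mul_rpow_of_nonneg _ _ hρ0.le]
    refine ENNReal.rpow_le_rpow ?_ hρ0.le
    rw [← ENNReal.coe_mul]
    refine ENNReal.coe_le_coe.mpr ?_
    have hsub : (F ωt).1 - (F ωt).2 = ωt.1.1 (σ ωt.2.1.1.1 - ωt.2.2) := by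
      show (ωt.1.1 (σ ωt.2.1.1.1) + ωt.1.2) - (ωt.1.1 ωt.2.2 + ωt.1.2) = _
      rw [add_sub_add_right_eq_sub, ← map_sub]
    rw [hsub]
    exact ωt.1.1.le_opNNNorm _
  have hWnorm : Measurable fun ω : (EuclideanSpace ℝ (Fin n) →L[ℝ]
      EuclideanSpace ℝ (Fin m)) × EuclideanSpace ℝ (Fin m) => (‖ω.1‖₊ : ℝ≥0∞) ^ ρ :=
    ((continuous_fst.measurable).nnnorm.coe_nnreal_ennreal).pow_const ρ
  have hgmeas : Measurable fun t : ((EuclideanSpace ℝ (Fin n) × EuclideanSpace ℝ (Fin n)) ×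
      EuclideanSpace ℝ (Fin n)) × EuclideanSpace ℝ (Fin n) =>
      (‖σ t.1.1.1 - t.2‖₊ : ℝ≥0∞) ^ ρ :=
    (((hσ.continuous.comp (continuous_fst.comp (continuous_fst.comp
      continuous_fst))).sub continuous_snd).measurable.nnnorm.coe_nnreal_ennreal).pow_const ρ
  have hcost_le : ∫⁻ z, (‖z.1 - z.2‖₊ : ℝ≥0∞) ^ ρ ∂Γ ≤
      (∫⁻ ω, (‖ω.1‖₊ : ℝ≥0∞) ^ ρ ∂pw) *
        ∫⁻ t, (‖σ t.1.1.1 - t.2‖₊ : ℝ≥0∞) ^ ρ ∂η := by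
    rw [hcostΓ, ← lintegral_prod_mul hWnorm.aemeasurable hgmeas.aemeasurable]
    exact lintegral_mono hpoint
  -- the three elementary pieces
  set e1 : ((EuclideanSpace ℝ (Fin n) × EuclideanSpace ℝ (Fin n)) ×
      EuclideanSpace ℝ (Fin n)) × EuclideanSpace ℝ (Fin n) → ℝ≥0∞ :=
    fun t => (Lσ : ℝ≥0∞) * (‖t.1.1.1 - t.1.1.2‖₊ : ℝ≥0∞) with he1
  set e2 : ((EuclideanSpace ℝ (Fin n) × EuclideanSpace ℝ (Fin n)) ×
      EuclideanSpace ℝ (Fin n)) × EuclideanSpace ℝ (Fin n) → ℝ≥0∞ :=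
    fun t => (Lσ : ℝ≥0∞) * (‖t.1.1.2 - t.1.2‖₊ : ℝ≥0∞) with he2
  set e3 : ((EuclideanSpace ℝ (Fin n) × EuclideanSpace ℝ (Fin n)) ×
      EuclideanSpace ℝ (Fin n)) × EuclideanSpace ℝ (Fin n) → ℝ≥0∞ :=
    fun t => (‖σ t.1.2 - t.2‖₊ : ℝ≥0∞) with he3
  have htri : ∀ t, (‖σ t.1.1.1 - t.2‖₊ : ℝ≥0∞) ≤ e1 t + e2 t + e3 t := by
    intro t
    have h4 : edist (σ t.1.1.1) t.2 ≤
        edist (σ t.1.1.1) (σ t.1.1.2) + edist (σ t.1.1.2) (σ t.1.2) +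
          edist (σ t.1.2) t.2 := edist_triangle4 _ _ _ _
    have hL1 : edist (σ t.1.1.1) (σ t.1.1.2) ≤ (Lσ : ℝ≥0∞) * edist t.1.1.1 t.1.1.2 := hσ _ _
    have hL2 : edist (σ t.1.1.2) (σ t.1.2) ≤ (Lσ : ℝ≥0∞) * edist t.1.1.2 t.1.2 := hσ _ _
    calc (‖σ t.1.1.1 - t.2‖₊ : ℝ≥0∞) = edist (σ t.1.1.1) t.2 :=
          (edist_eq_enorm_sub _ _).symm
      _ ≤ edist (σ t.1.1.1) (σ t.1.1.2) + edist (σ t.1.1.2) (σ t.1.2) +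
          edist (σ t.1.2) t.2 := h4
      _ ≤ (Lσ : ℝ≥0∞) * edist t.1.1.1 t.1.1.2 + (Lσ : ℝ≥0∞) * edist t.1.1.2 t.1.2 +
          edist (σ t.1.2) t.2 := by gcongr
      _ = e1 t + e2 t + e3 t := by
          rw [he1, he2, he3, edist_eq_enorm_sub, edist_eq_enorm_sub,
            edist_eq_enorm_sub]
          rfl
  have he1m : Measurable e1 := measurable_const.mul
    (((continuous_fst.comp (continuous_fst.comp continuous_fst)).sub
      (continuous_snd.comp (continuous_fst.comp continuous_fst))).measurable.nnnorm.coe_nnreal_ennreal)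
  have he2m : Measurable e2 := measurable_const.mul
    (((continuous_snd.comp (continuous_fst.comp continuous_fst)).sub
      (continuous_snd.comp continuous_fst)).measurable.nnnorm.coe_nnreal_ennreal)
  have he3m : Measurable e3 :=
    ((hσ.continuous.comp (continuous_snd.comp continuous_fst)).sub
      continuous_snd).measurable.nnnorm.coe_nnreal_ennreal
  -- values of the three pieces
  have hval1 : (∫⁻ t, e1 t ^ ρ ∂η) ^ (1/ρ) =
      (Lσ : ℝ≥0∞) * (∫⁻ z, (‖z.1 - z.2‖₊ : ℝ≥0∞) ^ ρ ∂γ1) ^ (1/ρ) := by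
    have hval : ∫⁻ t, e1 t ^ ρ ∂η =
        (Lσ : ℝ≥0∞) ^ ρ * ∫⁻ z, (‖z.1 - z.2‖₊ : ℝ≥0∞) ^ ρ ∂γ1 := by
      have hmr : ∀ t, e1 t ^ ρ = (Lσ : ℝ≥0∞) ^ ρ *
          (‖t.1.1.1 - t.1.1.2‖₊ : ℝ≥0∞) ^ ρ := fun t =>
        ENNReal.mul_rpow_of_nonneg _ _ hρ0.le
      simp_rw [hmr]
      rw [lintegral_const_mul _ (show Measurable fun t :
          ((EuclideanSpace ℝ (Fin n) × EuclideanSpace ℝ (Fin n)) ×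
          EuclideanSpace ℝ (Fin n)) × EuclideanSpace ℝ (Fin n) =>
          (‖t.1.1.1 - t.1.1.2‖₊ : ℝ≥0∞) ^ ρ from
          (measurable_fst.fst.fst.sub measurable_fst.fst.snd).nnnorm.coe_nnreal_ennreal.pow_const ρ), ← hπ1,
        lintegral_map hnormmeasX (measurable_fst.fst :)]
    rw [hval, ENNReal.mul_rpow_of_nonneg _ _ h1ρ, ← ENNReal.rpow_mul,
      mul_one_div_cancel hρ0.ne', ENNReal.rpow_one]
  have hval2 : (∫⁻ t, e2 t ^ ρ ∂η) ^ (1/ρ) =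
      (Lσ : ℝ≥0∞) * (∫⁻ z, (‖z.1 - z.2‖₊ : ℝ≥0∞) ^ ρ ∂γ2) ^ (1/ρ) := by
    have hval : ∫⁻ t, e2 t ^ ρ ∂η =
        (Lσ : ℝ≥0∞) ^ ρ * ∫⁻ z, (‖z.1 - z.2‖₊ : ℝ≥0∞) ^ ρ ∂γ2 := by
      have hmr : ∀ t, e2 t ^ ρ = (Lσ : ℝ≥0∞) ^ ρ *
          (‖t.1.1.2 - t.1.2‖₊ : ℝ≥0∞) ^ ρ := fun t =>
        ENNReal.mul_rpow_of_nonneg _ _ hρ0.le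
      simp_rw [hmr]
      rw [lintegral_const_mul _ (show Measurable fun t :
          ((EuclideanSpace ℝ (Fin n) × EuclideanSpace ℝ (Fin n)) ×
          EuclideanSpace ℝ (Fin n)) × EuclideanSpace ℝ (Fin n) =>
          (‖t.1.1.2 - t.1.2‖₊ : ℝ≥0∞) ^ ρ from
          (measurable_fst.fst.snd.sub measurable_fst.snd).nnnorm.coe_nnreal_ennreal.pow_const ρ), ← hπ2,
        lintegral_map hnormmeasX ((measurable_fst.fst.snd).prodMk measurable_fst.snd :)]
    rw [hval, ENNReal.mul_rpow_of_nonneg _ _ h1ρ, ← ENNReal.rpow_mul,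
      mul_one_div_cancel hρ0.ne', ENNReal.rpow_one]
  have hval3 : (∫⁻ t, e3 t ^ ρ ∂η) ^ (1/ρ) =
      (∫⁻ z, (‖z.1 - z.2‖₊ : ℝ≥0∞) ^ ρ ∂γ3) ^ (1/ρ) := by
    congr 1
    rw [← hπ3, lintegral_map hnormmeasX hg3m]
  -- Minkowski
  have hmink : (∫⁻ t, (‖σ t.1.1.1 - t.2‖₊ : ℝ≥0∞) ^ ρ ∂η) ^ (1/ρ) ≤
      (Lσ : ℝ≥0∞) * ((∫⁻ z, (‖z.1 - z.2‖₊ : ℝ≥0∞) ^ ρ ∂γ1) ^ (1/ρ)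
        + (∫⁻ z, (‖z.1 - z.2‖₊ : ℝ≥0∞) ^ ρ ∂γ2) ^ (1/ρ))
        + (∫⁻ z, (‖z.1 - z.2‖₊ : ℝ≥0∞) ^ ρ ∂γ3) ^ (1/ρ) := by
    have hstep1 : (∫⁻ t, (‖σ t.1.1.1 - t.2‖₊ : ℝ≥0∞) ^ ρ ∂η) ^ (1/ρ) ≤
        (∫⁻ t, ((fun s => e1 s + e2 s) t + e3 t) ^ ρ ∂η) ^ (1/ρ) := by
      refine ENNReal.rpow_le_rpow (lintegral_mono fun t => ?_) h1ρ
      exact ENNReal.rpow_le_rpow (htri t) hρ0.le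
    have hstep2 := ENNReal.lintegral_Lp_add_le (μ := η)
      ((he1m.add he2m).aemeasurable) he3m.aemeasurable hρ1
    have hstep3 := ENNReal.lintegral_Lp_add_le (μ := η)
      he1m.aemeasurable he2m.aemeasurable hρ1
    calc (∫⁻ t, (‖σ t.1.1.1 - t.2‖₊ : ℝ≥0∞) ^ ρ ∂η) ^ (1/ρ)
        ≤ (∫⁻ t, ((fun s => e1 s + e2 s) t + e3 t) ^ ρ ∂η) ^ (1/ρ) := hstep1
      _ ≤ (∫⁻ t, (e1 t + e2 t) ^ ρ ∂η) ^ (1/ρ) + (∫⁻ t, e3 t ^ ρ ∂η) ^ (1/ρ) := hstep2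
      _ ≤ ((∫⁻ t, e1 t ^ ρ ∂η) ^ (1/ρ) + (∫⁻ t, e2 t ^ ρ ∂η) ^ (1/ρ))
            + (∫⁻ t, e3 t ^ ρ ∂η) ^ (1/ρ) := add_le_add_left hstep3 _
      _ ≤ (Lσ : ℝ≥0∞) * ((∫⁻ z, (‖z.1 - z.2‖₊ : ℝ≥0∞) ^ ρ ∂γ1) ^ (1/ρ)
            + (∫⁻ z, (‖z.1 - z.2‖₊ : ℝ≥0∞) ^ ρ ∂γ2) ^ (1/ρ))
            + (∫⁻ z, (‖z.1 - z.2‖₊ : ℝ≥0∞) ^ ρ ∂γ3) ^ (1/ρ) := by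
          rw [hval1, hval2, hval3, mul_add]
  -- conclusion
  refine le_trans (wp_le_coupling hρ0.le Γ hΓ1 hΓ2) ?_
  refine le_trans (ENNReal.rpow_le_rpow hcost_le h1ρ) ?_
  rw [ENNReal.mul_rpow_of_nonneg _ _ h1ρ]
  exact mul_le_mul_right hmink _

end Key

section Final

open ProbabilityTheory

lemma PQ_eq (n m : ℕ)
    (pw : Measure ((EuclideanSpace ℝ (Fin n) →L[ℝ] EuclideanSpace ℝ (Fin m)) ×
      EuclideanSpace ℝ (Fin m))) [SFinite pw]
    (σ Δ : EuclideanSpace ℝ (Fin n) → EuclideanSpace ℝ (Fin n))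
    (hσm : Measurable σ) (hΔm : Measurable Δ)
    (p q' : Measure (EuclideanSpace ℝ (Fin n))) [SFinite p] [SFinite q']
    (h : p.map σ = q'.map (σ ∘ Δ)) :
    (pw.prod p).map (fun wbz => wbz.1.1 (σ wbz.2) + wbz.1.2) =
    (pw.prod q').map (fun wbz => wbz.1.1 (σ (Δ wbz.2)) + wbz.1.2) := by
  have happ : Continuous fun s : (EuclideanSpace ℝ (Fin n) →L[ℝ] EuclideanSpace ℝ (Fin m)) ×
      EuclideanSpace ℝ (Fin n) => s.1 s.2 := isBoundedBilinearMap_apply.continuous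
  have hf' : Measurable fun wbz : ((EuclideanSpace ℝ (Fin n) →L[ℝ]
      EuclideanSpace ℝ (Fin m)) × EuclideanSpace ℝ (Fin m)) × EuclideanSpace ℝ (Fin n) =>
      wbz.1.1 wbz.2 + wbz.1.2 :=
    ((happ.comp ((continuous_fst.comp continuous_fst).prodMk continuous_snd)).add
      (continuous_snd.comp continuous_fst)).measurable
  have e1 : (pw.prod p).map (fun wbz => wbz.1.1 (σ wbz.2) + wbz.1.2)
      = (pw.prod (p.map σ)).map (fun wbz => wbz.1.1 wbz.2 + wbz.1.2) := by
    have hm := Measure.map_prod_map (f := id) pw p measurable_id hσm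
    rw [Measure.map_id] at hm
    rw [hm, Measure.map_map hf' (measurable_id.prodMap hσm)]
    rfl
  have e2 : (pw.prod q').map (fun wbz => wbz.1.1 (σ (Δ wbz.2)) + wbz.1.2)
      = (pw.prod (q'.map (σ ∘ Δ))).map (fun wbz => wbz.1.1 wbz.2 + wbz.1.2) := by
    have hm := Measure.map_prod_map (f := id) pw q' measurable_id (hσm.comp hΔm)
    rw [Measure.map_id] at hm
    rw [hm, Measure.map_map hf' (measurable_id.prodMap (hσm.comp hΔm))]
    rfl
  rw [e1, e2, h]

end Final


/-- One-step inductive bound for the GMM approximation of a stochastic layer. -/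
theorem one_step_inductive_bound
    (ρ : ℝ) (hρ : ρ = 1 ∨ ρ = 2) (n m : ℕ)
    (pw : Measure ((EuclideanSpace ℝ (Fin n) →L[ℝ] EuclideanSpace ℝ (Fin m)) ×
      EuclideanSpace ℝ (Fin m)))
    [IsProbabilityMeasure pw]
    (Shat : ℝ≥0∞)
    (hS : (∫⁻ wb, (‖wb.1‖₊ : ℝ≥0∞) ^ ρ ∂pw) ^ (1/ρ) ≤ Shat)
    (σ : EuclideanSpace ℝ (Fin n) → EuclideanSpace ℝ (Fin n))
    (Lσ : ℝ≥0) (hσ : LipschitzWith Lσ σ)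
    (p q q' : Measure (EuclideanSpace ℝ (Fin n)))
    [IsProbabilityMeasure p] [IsProbabilityMeasure q] [IsProbabilityMeasure q']
    (hpm : ∫⁻ z, (‖z‖₊ : ℝ≥0∞) ^ ρ ∂p < ⊤)
    (hqm : ∫⁻ z, (‖z‖₊ : ℝ≥0∞) ^ ρ ∂q < ⊤)
    (hq'm : ∫⁻ z, (‖z‖₊ : ℝ≥0∞) ^ ρ ∂q' < ⊤)
    (What WR WΔ : ℝ≥0∞)
    (hW : Wp ρ p q ≤ What) (hWR : Wp ρ q q' ≤ WR)
    (C : Finset (EuclideanSpace ℝ (Fin n)))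
    (Δ : EuclideanSpace ℝ (Fin n) → EuclideanSpace ℝ (Fin n))
    (hΔ : IsSignatureMap C Δ)
    (hWΔ : Wp ρ (q'.map σ) (q'.map (σ ∘ Δ)) ≤ WΔ)
    (P Q : Measure (EuclideanSpace ℝ (Fin m)))
    (hP : P = (pw.prod p).map (fun wbz => wbz.1.1 (σ wbz.2) + wbz.1.2))
    (hQ : Q = (pw.prod q').map (fun wbz => wbz.1.1 (σ (Δ wbz.2)) + wbz.1.2)) :
    Wp ρ P Q ≤ Shat * ((Lσ : ℝ≥0∞) * (What + WR) + WΔ) := by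
  have hρ1 : (1:ℝ) ≤ ρ := by rcases hρ with h | h <;> rw [h] <;> norm_num
  have hρ0 : (0:ℝ) < ρ := lt_of_lt_of_le zero_lt_one hρ1
  have hσm : Measurable σ := hσ.continuous.measurable
  have hΔm : Measurable Δ := hΔ.1
  haveI : IsProbabilityMeasure (q'.map σ) := Measure.isProbabilityMeasure_map hσm.aemeasurable
  haveI : IsProbabilityMeasure (q'.map (σ ∘ Δ)) :=
    Measure.isProbabilityMeasure_map (hσm.comp hΔm).aemeasurable
  subst hP hQ
  -- Case: Lσ = 0 (σ is constant)
  by_cases hL : Lσ = 0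
  · have hconst : ∀ x, σ x = σ 0 := by
      intro x
      have := hσ.dist_le_mul x 0
      rw [hL] at this
      simpa using dist_le_zero.mp (by simpa using this)
    have hσeq : σ = fun _ => σ 0 := funext hconst
    have hσΔeq : σ ∘ Δ = fun _ => σ 0 := funext fun z => hconst (Δ z)
    have hmapeq : p.map σ = q'.map (σ ∘ Δ) := by
      rw [hσΔeq, hσeq, Measure.map_const, Measure.map_const, measure_univ, measure_univ]
    rw [PQ_eq n m pw σ Δ hσm hΔm p q' hmapeq]
    exact (wp_self_eq_zero hρ0 _).le.trans zero_le
  -- Case: all the W's vanish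
  by_cases hdeg : What = 0 ∧ WR = 0 ∧ WΔ = 0
  · obtain ⟨h1, h2, h3⟩ := hdeg
    have hpq : p = q := eq_of_wp_eq_zero hρ0 (le_zero_iff.mp (h1 ▸ hW))
    have hqq' : q = q' := eq_of_wp_eq_zero hρ0 (le_zero_iff.mp (h2 ▸ hWR))
    have hσσΔ : q'.map σ = q'.map (σ ∘ Δ) :=
      eq_of_wp_eq_zero hρ0 (le_zero_iff.mp (h3 ▸ hWΔ))
    have hmapeq : p.map σ = q'.map (σ ∘ Δ) := by rw [hpq, hqq', hσσΔ]
    rw [PQ_eq n m pw σ Δ hσm hΔm p q' hmapeq]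
    exact (wp_self_eq_zero hρ0 _).le.trans zero_le
  -- Case: Shat = 0
  by_cases hS0 : Shat = 0
  · have hSval : (∫⁻ wb, (‖wb.1‖₊ : ℝ≥0∞) ^ ρ ∂pw) ^ (1/ρ) = 0 :=
      le_zero_iff.mp (hS0 ▸ hS)
    have hkey := key_bound ρ hρ1 n m pw σ Lσ hσ p q q' Δ hΔm
      (p.prod q) (q.prod q') ((q'.map σ).prod (q'.map (σ ∘ Δ)))
      Measure.fst_prod Measure.snd_prod Measure.fst_prod Measure.snd_prod
      Measure.fst_prod Measure.snd_prod
    rw [hSval, zero_mul] at hkey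
    exact hkey.trans zero_le
  -- Case: Shat = ⊤
  by_cases hStop : Shat = ⊤
  · have hbr : (Lσ : ℝ≥0∞) * (What + WR) + WΔ ≠ 0 := by
      intro h0
      rw [add_eq_zero] at h0
      obtain ⟨hmul, hWΔ0⟩ := h0
      rcases mul_eq_zero.mp hmul with hL0 | hsum
      · exact hL (by exact_mod_cast hL0)
      · rw [add_eq_zero] at hsum
        exact hdeg ⟨hsum.1, hsum.2, hWΔ0⟩
    rw [hStop, ENNReal.top_mul hbr]
    exact le_top
  -- Case: one of the W's is ⊤
  by_cases hWtop : What = ⊤ ∨ WR = ⊤ ∨ WΔ = ⊤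
  · have hbr : (Lσ : ℝ≥0∞) * (What + WR) + WΔ = ⊤ := by
      have hLne : (Lσ : ℝ≥0∞) ≠ 0 := by exact_mod_cast hL
      rcases hWtop with h | h | h
      · rw [h]
        simp [ENNReal.mul_top, ENNReal.add_eq_top, hLne]
      · rw [h]
        simp [ENNReal.mul_top, ENNReal.add_eq_top, hLne]
      · rw [h]; simp
    rw [hbr, ENNReal.mul_top hS0]
    exact le_top
  push_neg at hWtop
  obtain ⟨hWhatfin, hWRfin, hWΔfin⟩ := hWtop
  -- Main case: ε-argument
  refine ENNReal.le_of_forall_pos_le_add fun ε hε hfin => ?_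
  set c : ℝ≥0∞ := Shat * (2 * (Lσ : ℝ≥0∞) + 1) with hc
  have hc0 : c ≠ 0 := by
    refine mul_ne_zero hS0 ?_
    simp
  have hcT : c ≠ ⊤ := by
    refine ENNReal.mul_ne_top hStop ?_
    refine ENNReal.add_ne_top.mpr ⟨ENNReal.mul_ne_top (by simp) ENNReal.coe_ne_top, by simp⟩
  set εE : ℝ≥0∞ := (ε : ℝ≥0∞) / c with hεE
  have hεE0 : 0 < εE := ENNReal.div_pos (by exact_mod_cast hε.ne') hcT
  obtain ⟨γ1, h11, h12, hc1⟩ := exists_coupling_of_wp_le hρ0 hW hWhatfin hεE0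
  obtain ⟨γ2, h21, h22, hc2⟩ := exists_coupling_of_wp_le hρ0 hWR hWRfin hεE0
  obtain ⟨γ3, h31, h32, hc3⟩ := exists_coupling_of_wp_le hρ0 hWΔ hWΔfin hεE0
  have hkey := key_bound ρ hρ1 n m pw σ Lσ hσ p q q' Δ hΔm γ1 γ2 γ3
    h11 h12 h21 h22 h31 h32
  refine hkey.trans ?_
  have hbound : (∫⁻ wb, (‖wb.1‖₊ : ℝ≥0∞) ^ ρ ∂pw) ^ (1/ρ) *
      ((Lσ : ℝ≥0∞) * ((∫⁻ z, (‖z.1 - z.2‖₊ : ℝ≥0∞) ^ ρ ∂γ1) ^ (1/ρ)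
        + (∫⁻ z, (‖z.1 - z.2‖₊ : ℝ≥0∞) ^ ρ ∂γ2) ^ (1/ρ))
        + (∫⁻ z, (‖z.1 - z.2‖₊ : ℝ≥0∞) ^ ρ ∂γ3) ^ (1/ρ)) ≤
      Shat * ((Lσ : ℝ≥0∞) * ((What + εE) + (WR + εE)) + (WΔ + εE)) := by
    refine mul_le_mul' hS ?_
    gcongr
  refine hbound.trans ?_
  have hdist : (Lσ : ℝ≥0∞) * ((What + εE) + (WR + εE)) + (WΔ + εE) =
      ((Lσ : ℝ≥0∞) * (What + WR) + WΔ) + (2 * (Lσ : ℝ≥0∞) + 1) * εE := by ring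
  rw [hdist, mul_add, ← mul_assoc]
  rw [← hc]
  refine add_le_add_right ?_ _
  exact ENNReal.mul_div_le
end

section
/- (2-Wasserstein distance for grid signatures of a multivariate Gaussian.) Let Σ ∈ ℝ^{n×n} be symmetric positive definite with eigendecomposition Σ = V diag(λ) Vᵀ, where V is orthogonal and λ_1,…,λ_n > 0, let m ∈ ℝⁿ, and set T = diag(λ)^{−1/2} Vᵀ. For each l = 1,…,n let C̄^l = {c̄^l_1 < … < c̄^l_{N_l}} ⊂ ℝ be a finite set with its 1-D Voronoi interval partition of ℝ. Define the signature locations C = { m + T^{−1} c̄ : c̄ ∈ C̄¹ × … × C̄ⁿ }, with the region assigned to m + T^{−1}(c̄¹_{i_1},…,c̄ⁿ_{i_n}) being the preimage under z ↦ T(z − m) of the product of the corresponding 1-D Voronoi intervals, and let Δ_C map each point to the location of its region. Then W_2^2( Δ_C#N(m,Σ), N(m,Σ) ) = Σ_{l=1}^n λ_l · W_2^2( Δ_{C̄^l}#N(0,1), N(0,1) ), where Δ_{C̄^l} is the 1-D Voronoi quantization map onto C̄^l. -/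
open MeasureTheory ProbabilityTheory Matrix
open scoped ENNReal NNReal

/-- Identify a vector of reals with a point of Euclidean space. -/
noncomputable def toE {n : ℕ} (f : Fin n → ℝ) : EuclideanSpace ℝ (Fin n) :=
  (EuclideanSpace.equiv (Fin n) ℝ).symm f

/-- Identify a point of Euclidean space with a vector of reals. -/
noncomputable def ofE {n : ℕ} (z : EuclideanSpace ℝ (Fin n)) : Fin n → ℝ :=
  EuclideanSpace.equiv (Fin n) ℝ z

/-- The standard Gaussian measure `N(0, I)` on `ℝⁿ`. -/
noncomputable def stdGaussianE (n : ℕ) : Measure (EuclideanSpace ℝ (Fin n)) :=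
  (Measure.pi fun _ : Fin n => gaussianReal 0 1).map toE

/-- The Gaussian measure `N(m, Σ)` on `ℝⁿ` with `Σ = V diag(λ) Vᵀ`, realized
as the law of `m + T⁻¹ z = m + V diag(λ)^{1/2} z` for `z ∼ N(0, I)`, where
`T = diag(λ)^{−1/2} Vᵀ`. -/
noncomputable def gaussianE (n : ℕ) (m : EuclideanSpace ℝ (Fin n))
    (V : Matrix (Fin n) (Fin n) ℝ) (lam : Fin n → ℝ) :
    Measure (EuclideanSpace ℝ (Fin n)) :=
  (stdGaussianE n).map
    (fun z => m + toE (V.mulVec fun l => Real.sqrt (lam l) * ofE z l))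

/-! ### Auxiliary lemmas -/

lemma myPi_map_eval {ι : Type*} [Fintype ι] [DecidableEq ι] {α : ι → Type*}
    [∀ i, MeasurableSpace (α i)]
    (μ : ∀ i, Measure (α i)) [∀ i, IsProbabilityMeasure (μ i)] (i : ι) :
    (Measure.pi μ).map (Function.eval i) = μ i := by
  ext s hs
  rw [Measure.map_apply (measurable_pi_apply i) hs]
  have hpre : Function.eval i ⁻¹' s
      = Set.pi Set.univ (Function.update (fun j => (Set.univ : Set (α j))) i s) := by
    ext x
    simp only [Set.mem_preimage, Set.mem_pi, Set.mem_univ, forall_true_left]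
    constructor
    · intro hx j
      rcases eq_or_ne j i with rfl | hj
      · simpa using hx
      · simp [Function.update_of_ne hj]
    · intro hx
      simpa using hx i
  rw [hpre, Measure.pi_pi]
  rw [Finset.prod_eq_single i]
  · simp
  · intro j _ hj
    simp [Function.update_of_ne hj]
  · simp

lemma myPi_map_pi {ι : Type*} [Fintype ι] {α β : ι → Type*} [∀ i, MeasurableSpace (α i)]
    [∀ i, MeasurableSpace (β i)] (μ : ∀ i, Measure (α i)) [∀ i, IsProbabilityMeasure (μ i)]
    (f : ∀ i, α i → β i) (hf : ∀ i, Measurable (f i)) :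
    (Measure.pi μ).map (fun x i => f i (x i)) = Measure.pi (fun i => (μ i).map (f i)) := by
  have hF : Measurable (fun x : ∀ i, α i => fun i => f i (x i)) :=
    measurable_pi_iff.mpr fun i => (hf i).comp (measurable_pi_apply i)
  haveI : ∀ i, IsProbabilityMeasure ((μ i).map (f i)) :=
    fun i => Measure.isProbabilityMeasure_map (hf i).aemeasurable
  refine (Measure.pi_eq fun s hs => ?_).symm
  rw [Measure.map_apply hF (MeasurableSet.univ_pi hs)]
  have hpre : (fun x : ∀ i, α i => fun i => f i (x i)) ⁻¹' (Set.pi Set.univ s)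
      = Set.pi Set.univ (fun i => f i ⁻¹' s i) := by
    ext x; simp [Set.mem_pi]
  rw [hpre, Measure.pi_pi]
  exact Finset.prod_congr rfl fun i _ => (Measure.map_apply (hf i) (hs i)).symm

lemma iInf_coupling_comp {α β : Type*} [MeasurableSpace α] [MeasurableSpace β]
    (φ : α → β) (ψ : β → α) (hφ : Measurable φ) (hψ : Measurable ψ)
    (h1 : ∀ b, φ (ψ b) = b) (h2 : ∀ a, ψ (φ a) = a)
    (C : β × β → ℝ≥0∞) (hC : Measurable C)
    (p q : Measure α) :
    (⨅ γ ∈ {γ : Measure (β × β) | γ.map Prod.fst = p.map φ ∧ γ.map Prod.snd = q.map φ},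
      ∫⁻ z, C z ∂γ)
    = ⨅ γ ∈ {γ : Measure (α × α) | γ.map Prod.fst = p ∧ γ.map Prod.snd = q},
      ∫⁻ z, C (φ z.1, φ z.2) ∂γ := by
  apply le_antisymm
  · refine le_iInf₂ fun γ hγ => ?_
    refine iInf₂_le_of_le (γ.map (Prod.map φ φ)) ⟨?_, ?_⟩ ?_
    · rw [Measure.map_map measurable_fst (hφ.prodMap hφ)]
      have : (Prod.fst ∘ Prod.map φ φ : α × α → β) = φ ∘ Prod.fst := rfl
      rw [this, ← Measure.map_map hφ measurable_fst, hγ.1]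
    · rw [Measure.map_map measurable_snd (hφ.prodMap hφ)]
      have : (Prod.snd ∘ Prod.map φ φ : α × α → β) = φ ∘ Prod.snd := rfl
      rw [this, ← Measure.map_map hφ measurable_snd, hγ.2]
    · rw [lintegral_map hC (hφ.prodMap hφ)]
      exact le_of_eq (lintegral_congr fun z => rfl)
  · refine le_iInf₂ fun γ hγ => ?_
    refine iInf₂_le_of_le (γ.map (Prod.map ψ ψ)) ⟨?_, ?_⟩ ?_
    · rw [Measure.map_map measurable_fst (hψ.prodMap hψ)]
      have h : (Prod.fst ∘ Prod.map ψ ψ : β × β → α) = ψ ∘ Prod.fst := rfl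
      rw [h, ← Measure.map_map hψ measurable_fst, hγ.1, Measure.map_map hψ hφ]
      have h' : (ψ ∘ φ : α → α) = id := funext h2
      rw [h', Measure.map_id]
    · rw [Measure.map_map measurable_snd (hψ.prodMap hψ)]
      have h : (Prod.snd ∘ Prod.map ψ ψ : β × β → α) = ψ ∘ Prod.snd := rfl
      rw [h, ← Measure.map_map hψ measurable_snd, hγ.2, Measure.map_map hψ hφ]
      have h' : (ψ ∘ φ : α → α) = id := funext h2
      rw [h', Measure.map_id]
    · have hC' : Measurable fun z : α × α => C (φ z.1, φ z.2) :=
        hC.comp ((hφ.comp measurable_fst).prodMk (hφ.comp measurable_snd))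
      rw [lintegral_map hC' (hψ.prodMap hψ)]
      refine le_of_eq (lintegral_congr fun z => ?_)
      simp [Prod.map, h1]

lemma cost1d (x y : ℝ) : (‖x - y‖₊ : ℝ≥0∞) ^ (2:ℝ) = ENNReal.ofReal ((x - y)^2) := by
  rw [← enorm_eq_nnnorm, ← ofReal_norm,
    ENNReal.ofReal_rpow_of_nonneg (norm_nonneg _) (by norm_num : (0:ℝ) ≤ 2)]
  congr 1
  rw [show (2:ℝ) = ((2:ℕ):ℝ) by norm_num, Real.rpow_natCast, Real.norm_eq_abs, sq_abs]

lemma Wp_two_sq {E : Type*} [NormedAddCommGroup E] [MeasurableSpace E] (p q : Measure E) :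
    Wp 2 p q ^ (2:ℝ)
      = ⨅ γ ∈ {γ : Measure (E × E) | γ.map Prod.fst = p ∧ γ.map Prod.snd = q},
        ∫⁻ z, (‖z.1 - z.2‖₊ : ℝ≥0∞) ^ (2:ℝ) ∂γ := by
  rw [Wp, ← ENNReal.rpow_mul]
  norm_num

noncomputable def phiF {n : ℕ} (m : EuclideanSpace ℝ (Fin n)) (V : Matrix (Fin n) (Fin n) ℝ)
    (lam : Fin n → ℝ) : (Fin n → ℝ) → EuclideanSpace ℝ (Fin n) :=
  fun a => m + toE (V.mulVec fun l => Real.sqrt (lam l) * a l)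

noncomputable def psiF {n : ℕ} (m : EuclideanSpace ℝ (Fin n)) (V : Matrix (Fin n) (Fin n) ℝ)
    (lam : Fin n → ℝ) : EuclideanSpace ℝ (Fin n) → (Fin n → ℝ) :=
  fun z l => (Real.sqrt (lam l))⁻¹ * Vᵀ.mulVec (ofE (z - m)) l


set_option maxHeartbeats 2000000 in
/-- `W_2²` between a multivariate Gaussian `N(m, Σ)`, `Σ = V diag(λ) Vᵀ`, and
its signature over a grid in the transformed space induced by
`T = diag(λ)^{−1/2} Vᵀ` decomposes as the `λ`-weighted sum of the squared 1-D
Wasserstein distances of the standard Gaussian from its 1-D Voronoi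
signatures.  The grid quantization map is
`Δ(z) = m + T⁻¹ (Δ_{C̄^1} × … × Δ_{C̄ⁿ}) (T (z − m))`. -/
theorem wasserstein_signature_multivariate_gaussian
    (n : ℕ) (m : EuclideanSpace ℝ (Fin n))
    (V : Matrix (Fin n) (Fin n) ℝ) (hV : Vᵀ * V = 1)
    (lam : Fin n → ℝ) (hlam : ∀ l, 0 < lam l)
    (N : Fin n → ℕ) (hN : ∀ l, 0 < N l)
    (cbar : (l : Fin n) → Fin (N l) → ℝ) (hmono : ∀ l, StrictMono (cbar l))
    -- the 1-D Voronoi quantization maps onto the sets `C̄^l`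
    (Δ1 : Fin n → ℝ → ℝ)
    (hΔ1meas : ∀ l, Measurable (Δ1 l))
    (hΔ1mem : ∀ l z, Δ1 l z ∈ Set.range (cbar l))
    (hΔ1near : ∀ l z j, |z - Δ1 l z| ≤ |z - cbar l j|) :
    Wp 2
        ((gaussianE n m V lam).map (fun z =>
          m + toE (V.mulVec fun l => Real.sqrt (lam l) *
            Δ1 l ((Real.sqrt (lam l))⁻¹ * Vᵀ.mulVec (ofE (z - m)) l))))
        (gaussianE n m V lam) ^ (2 : ℝ)
      = ∑ l, ENNReal.ofReal (lam l) *
          Wp 2 ((gaussianReal 0 1).map (Δ1 l)) (gaussianReal 0 1) ^ (2 : ℝ) := by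
  classical
  have hsqrt : ∀ l, Real.sqrt (lam l) ≠ 0 := fun l => (Real.sqrt_pos.mpr (hlam l)).ne'
  have hVVT : V * Vᵀ = 1 := mul_eq_one_comm.mp hV
  haveI hprob1 : ∀ l, IsProbabilityMeasure ((gaussianReal 0 1).map (Δ1 l)) :=
    fun l => Measure.isProbabilityMeasure_map (hΔ1meas l).aemeasurable
  -- continuity / measurability
  have hmulVecCont : ∀ A : Matrix (Fin n) (Fin n) ℝ,
      Continuous fun v : Fin n → ℝ => A.mulVec v := by
    intro A
    refine continuous_pi fun i => ?_
    simp only [Matrix.mulVec, dotProduct]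
    exact continuous_finset_sum _ fun j _ => continuous_const.mul (continuous_apply j)
  have htoE : Continuous (toE (n := n)) := (EuclideanSpace.equiv (Fin n) ℝ).symm.continuous
  have hofE : Continuous (ofE (n := n)) := (EuclideanSpace.equiv (Fin n) ℝ).continuous
  have hφc : Continuous (phiF m V lam) := by
    refine continuous_const.add (htoE.comp ((hmulVecCont V).comp ?_))
    exact continuous_pi fun l => continuous_const.mul (continuous_apply l)
  have hφm : Measurable (phiF m V lam) := hφc.measurable
  have hψc : Continuous (psiF m V lam) := by
    refine continuous_pi fun l => continuous_const.mul ?_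
    exact (continuous_apply l).comp
      ((hmulVecCont Vᵀ).comp (hofE.comp (continuous_id.sub continuous_const)))
  have hψm : Measurable (psiF m V lam) := hψc.measurable
  have hΔvm : Measurable (fun (a : Fin n → ℝ) l => Δ1 l (a l)) :=
    measurable_pi_iff.mpr fun l => (hΔ1meas l).comp (measurable_pi_apply l)
  -- inverse identities
  have hψφ : ∀ a, psiF m V lam (phiF m V lam a) = a := by
    intro a; funext l
    show (Real.sqrt (lam l))⁻¹
      * Vᵀ.mulVec (ofE ((m + toE (V.mulVec fun l => Real.sqrt (lam l) * a l)) - m)) l = a l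
    rw [add_sub_cancel_left]
    have h1 : ofE (toE (V.mulVec fun l => Real.sqrt (lam l) * a l))
        = V.mulVec fun l => Real.sqrt (lam l) * a l := rfl
    rw [h1, Matrix.mulVec_mulVec, hV, Matrix.one_mulVec]
    exact inv_mul_cancel_left₀ (hsqrt l) _
  have hφψ : ∀ z, phiF m V lam (psiF m V lam z) = z := by
    intro z
    show m + toE (V.mulVec fun l => Real.sqrt (lam l)
      * ((Real.sqrt (lam l))⁻¹ * Vᵀ.mulVec (ofE (z - m)) l)) = z
    have h1 : (fun l => Real.sqrt (lam l)
        * ((Real.sqrt (lam l))⁻¹ * Vᵀ.mulVec (ofE (z - m)) l)) = Vᵀ.mulVec (ofE (z - m)) := by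
      funext l; exact mul_inv_cancel_left₀ (hsqrt l) _
    rw [h1, Matrix.mulVec_mulVec, hVVT, Matrix.one_mulVec]
    have h2 : toE (ofE (z - m)) = z - m := rfl
    rw [h2]
    abel
  -- the cost identity
  have hφsub : ∀ a b : Fin n → ℝ, phiF m V lam a - phiF m V lam b
      = toE (V.mulVec fun l => Real.sqrt (lam l) * (a l - b l)) := by
    intro a b
    show (m + toE (V.mulVec fun l => Real.sqrt (lam l) * a l))
      - (m + toE (V.mulVec fun l => Real.sqrt (lam l) * b l)) = _
    rw [add_sub_add_left_eq_sub]
    have h1 : toE (V.mulVec fun l => Real.sqrt (lam l) * a l)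
        - toE (V.mulVec fun l => Real.sqrt (lam l) * b l)
        = toE ((V.mulVec fun l => Real.sqrt (lam l) * a l)
            - V.mulVec fun l => Real.sqrt (lam l) * b l) := rfl
    have h2 : ((fun l => Real.sqrt (lam l) * a l) - fun l => Real.sqrt (lam l) * b l)
        = fun l => Real.sqrt (lam l) * (a l - b l) := by
      funext l; simp [mul_sub]
    rw [h1, ← Matrix.mulVec_sub, h2]
  have horth : ∀ w : Fin n → ℝ, ∑ l, (V.mulVec w l)^2 = ∑ l, (w l)^2 := by
    intro w
    have h1 : ∑ l, (V.mulVec w l)^2 = (V.mulVec w) ⬝ᵥ (V.mulVec w) := by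
      simp [dotProduct, sq]
    have h2 : (V.mulVec w) ⬝ᵥ (V.mulVec w) = w ⬝ᵥ w := by
      rw [dotProduct_mulVec, ← Matrix.mulVec_transpose, Matrix.mulVec_mulVec, hV,
        Matrix.one_mulVec]
    have h3 : w ⬝ᵥ w = ∑ l, (w l)^2 := by simp [dotProduct, sq]
    rw [h1, h2, h3]
  have hcostE : ∀ a b : Fin n → ℝ,
      (‖phiF m V lam a - phiF m V lam b‖₊ : ℝ≥0∞) ^ (2:ℝ)
        = ∑ l, ENNReal.ofReal (lam l) * ENNReal.ofReal ((a l - b l)^2) := by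
    intro a b
    rw [hφsub, ← enorm_eq_nnnorm, ← ofReal_norm,
      ENNReal.ofReal_rpow_of_nonneg (norm_nonneg _) (by norm_num : (0:ℝ) ≤ 2)]
    have hnn : ‖toE (V.mulVec fun l => Real.sqrt (lam l) * (a l - b l))‖ ^ (2:ℝ)
        = ∑ l, lam l * (a l - b l)^2 := by
      rw [show (2:ℝ) = ((2:ℕ):ℝ) by norm_num, Real.rpow_natCast]
      rw [EuclideanSpace.norm_eq]
      rw [Real.sq_sqrt (Finset.sum_nonneg fun l _ => sq_nonneg _)]
      have he : ∀ i, ‖toE (V.mulVec fun l => Real.sqrt (lam l) * (a l - b l)) i‖ ^ 2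
          = (V.mulVec (fun l => Real.sqrt (lam l) * (a l - b l)) i)^2 := by
        intro i; rw [Real.norm_eq_abs, sq_abs]; rfl
      rw [Finset.sum_congr rfl fun i _ => he i, horth]
      refine Finset.sum_congr rfl fun l _ => ?_
      rw [mul_pow, Real.sq_sqrt (hlam l).le]
    rw [hnn, ENNReal.ofReal_sum_of_nonneg fun l _ => mul_nonneg (hlam l).le (sq_nonneg _)]
    exact Finset.sum_congr rfl fun l _ => ENNReal.ofReal_mul (hlam l).le
  -- measure identities
  have houter : Measurable fun z : EuclideanSpace ℝ (Fin n) =>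
      m + toE (V.mulVec fun l => Real.sqrt (lam l) * ofE z l) := by
    refine (continuous_const.add (htoE.comp ((hmulVecCont V).comp ?_))).measurable
    exact continuous_pi fun l => continuous_const.mul ((continuous_apply l).comp hofE)
  have hgaussφ : gaussianE n m V lam
      = (Measure.pi fun _ : Fin n => gaussianReal 0 1).map (phiF m V lam) := by
    rw [gaussianE, stdGaussianE, Measure.map_map houter htoE.measurable]
    have h : ((fun z : EuclideanSpace ℝ (Fin n) =>
        m + toE (V.mulVec fun l => Real.sqrt (lam l) * ofE z l)) ∘ toE) = phiF m V lam := rfl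
    rw [h]
  have hμq : (gaussianE n m V lam).map (fun z =>
        m + toE (V.mulVec fun l => Real.sqrt (lam l) *
          Δ1 l ((Real.sqrt (lam l))⁻¹ * Vᵀ.mulVec (ofE (z - m)) l)))
      = ((Measure.pi fun _ : Fin n => gaussianReal 0 1).map
          (fun a l => Δ1 l (a l))).map (phiF m V lam) := by
    have hfull : (fun z : EuclideanSpace ℝ (Fin n) =>
        m + toE (V.mulVec fun l => Real.sqrt (lam l) *
          Δ1 l ((Real.sqrt (lam l))⁻¹ * Vᵀ.mulVec (ofE (z - m)) l)))
        = phiF m V lam ∘ (fun a l => Δ1 l (a l)) ∘ psiF m V lam := rfl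
    have hfm : Measurable (phiF m V lam ∘ (fun a l => Δ1 l (a l)) ∘ psiF m V lam) :=
      hφm.comp (hΔvm.comp hψm)
    rw [hfull, hgaussφ, Measure.map_map hfm hφm, Measure.map_map hφm hΔvm]
    have h : ((phiF m V lam ∘ (fun a l => Δ1 l (a l)) ∘ psiF m V lam) ∘ phiF m V lam)
        = phiF m V lam ∘ (fun a l => Δ1 l (a l)) := by
      funext a
      show phiF m V lam ((fun a l => Δ1 l (a l)) (psiF m V lam (phiF m V lam a)))
        = phiF m V lam ((fun a l => Δ1 l (a l)) a)
      rw [hψφ]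
    rw [h]
  have hmargΔ : (Measure.pi fun _ : Fin n => gaussianReal 0 1).map (fun a l => Δ1 l (a l))
      = Measure.pi (fun l => (gaussianReal 0 1).map (Δ1 l)) :=
    myPi_map_pi _ _ hΔ1meas
  -- cost measurability
  have hCEm : Measurable (fun z : (EuclideanSpace ℝ (Fin n)) × (EuclideanSpace ℝ (Fin n)) =>
      (‖z.1 - z.2‖₊ : ℝ≥0∞) ^ (2:ℝ)) :=
    ((measurable_fst.sub measurable_snd).enorm).pow_const (2:ℝ)
  have hC1 : Measurable fun p : ℝ × ℝ => ENNReal.ofReal ((p.1 - p.2)^2) :=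
    ((measurable_fst.sub measurable_snd).pow_const 2).ennreal_ofReal
  have hIl : ∀ l, Measurable fun z : (Fin n → ℝ) × (Fin n → ℝ) =>
      ENNReal.ofReal ((z.1 l - z.2 l)^2) := fun l =>
    ((((measurable_pi_apply l).comp measurable_fst).sub
      ((measurable_pi_apply l).comp measurable_snd)).pow_const 2).ennreal_ofReal
  have key := iInf_coupling_comp (phiF m V lam) (psiF m V lam) hφm hψm hφψ hψφ
    (fun z : (EuclideanSpace ℝ (Fin n)) × (EuclideanSpace ℝ (Fin n)) =>
      (‖z.1 - z.2‖₊ : ℝ≥0∞) ^ (2:ℝ)) hCEm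
    ((Measure.pi fun _ : Fin n => gaussianReal 0 1).map (fun a l => Δ1 l (a l)))
    (Measure.pi fun _ : Fin n => gaussianReal 0 1)
  have t1 := Wp_two_sq (((Measure.pi fun _ : Fin n => gaussianReal 0 1).map
          (fun a l => Δ1 l (a l))).map (phiF m V lam))
        ((Measure.pi fun _ : Fin n => gaussianReal 0 1).map (phiF m V lam))
  have t2 : (⨅ γ ∈ {γ : Measure ((EuclideanSpace ℝ (Fin n)) × (EuclideanSpace ℝ (Fin n))) |
          γ.map Prod.fst = ((Measure.pi fun _ : Fin n => gaussianReal 0 1).map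
            (fun a l => Δ1 l (a l))).map (phiF m V lam) ∧
          γ.map Prod.snd = (Measure.pi fun _ : Fin n => gaussianReal 0 1).map (phiF m V lam)},
        ∫⁻ z, (‖z.1 - z.2‖₊ : ℝ≥0∞) ^ (2:ℝ) ∂γ)
      = ⨅ γ ∈ {γ : Measure ((Fin n → ℝ) × (Fin n → ℝ)) |
          γ.map Prod.fst = (Measure.pi fun _ : Fin n => gaussianReal 0 1).map
            (fun a l => Δ1 l (a l)) ∧
          γ.map Prod.snd = Measure.pi fun _ : Fin n => gaussianReal 0 1},
        ∫⁻ z, (‖phiF m V lam z.1 - phiF m V lam z.2‖₊ : ℝ≥0∞) ^ (2:ℝ) ∂γ := key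
  have t3 : (⨅ γ ∈ {γ : Measure ((Fin n → ℝ) × (Fin n → ℝ)) |
          γ.map Prod.fst = (Measure.pi fun _ : Fin n => gaussianReal 0 1).map
            (fun a l => Δ1 l (a l)) ∧
          γ.map Prod.snd = Measure.pi fun _ : Fin n => gaussianReal 0 1},
        ∫⁻ z, (‖phiF m V lam z.1 - phiF m V lam z.2‖₊ : ℝ≥0∞) ^ (2:ℝ) ∂γ)
      = ⨅ γ ∈ {γ : Measure ((Fin n → ℝ) × (Fin n → ℝ)) |
          γ.map Prod.fst = (Measure.pi fun _ : Fin n => gaussianReal 0 1).map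
            (fun a l => Δ1 l (a l)) ∧
          γ.map Prod.snd = Measure.pi fun _ : Fin n => gaussianReal 0 1},
        ∑ l, ENNReal.ofReal (lam l) * ∫⁻ z, ENNReal.ofReal ((z.1 l - z.2 l)^2) ∂γ := by
    refine iInf_congr fun γ => iInf_congr fun _ => ?_
    have step1 : ∫⁻ z, (‖phiF m V lam z.1 - phiF m V lam z.2‖₊ : ℝ≥0∞) ^ (2:ℝ) ∂γ
        = ∫⁻ z : (Fin n → ℝ) × (Fin n → ℝ),
            ∑ l, ENNReal.ofReal (lam l) * ENNReal.ofReal ((z.1 l - z.2 l)^2) ∂γ :=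
      lintegral_congr fun z => hcostE z.1 z.2
    rw [step1, lintegral_finset_sum (f := fun l (z : (Fin n → ℝ) × (Fin n → ℝ)) => ENNReal.ofReal (lam l) * ENNReal.ofReal ((z.1 l - z.2 l)^2))
      _ (fun l _ => measurable_const.mul (hIl l))]
    exact Finset.sum_congr rfl fun l _ => lintegral_const_mul _ (hIl l)
  have hK_le : ∀ γ : Measure ((Fin n → ℝ) × (Fin n → ℝ)),
      γ.map Prod.fst = (Measure.pi fun _ : Fin n => gaussianReal 0 1).map
        (fun a l => Δ1 l (a l)) →
      γ.map Prod.snd = (Measure.pi fun _ : Fin n => gaussianReal 0 1) →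
      ∀ l, (⨅ δ ∈ {δ : Measure (ℝ × ℝ) |
            δ.map Prod.fst = (gaussianReal 0 1).map (Δ1 l) ∧
            δ.map Prod.snd = gaussianReal 0 1},
          ∫⁻ p, ENNReal.ofReal ((p.1 - p.2)^2) ∂δ)
        ≤ ∫⁻ z, ENNReal.ofReal ((z.1 l - z.2 l)^2) ∂γ := by
    intro γ h1 h2 l
    have hpm : Measurable (fun z : (Fin n → ℝ) × (Fin n → ℝ) => (z.1 l, z.2 l)) :=
      ((measurable_pi_apply l).comp measurable_fst).prodMk
        ((measurable_pi_apply l).comp measurable_snd)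
    refine iInf₂_le_of_le (γ.map (fun z => (z.1 l, z.2 l))) ⟨?_, ?_⟩ ?_
    · rw [Measure.map_map measurable_fst hpm]
      have e1 : (Prod.fst ∘ fun z : (Fin n → ℝ) × (Fin n → ℝ) => (z.1 l, z.2 l))
          = (fun a : Fin n → ℝ => a l) ∘ Prod.fst := rfl
      rw [e1, ← Measure.map_map (measurable_pi_apply l) measurable_fst, h1, hmargΔ]
      exact myPi_map_eval (fun l => (gaussianReal 0 1).map (Δ1 l)) l
    · rw [Measure.map_map measurable_snd hpm]
      have e1 : (Prod.snd ∘ fun z : (Fin n → ℝ) × (Fin n → ℝ) => (z.1 l, z.2 l))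
          = (fun a : Fin n → ℝ => a l) ∘ Prod.snd := rfl
      rw [e1, ← Measure.map_map (measurable_pi_apply l) measurable_snd, h2]
      exact myPi_map_eval (fun _ => gaussianReal 0 1) l
    · rw [lintegral_map hC1 hpm]
  have t4 : (⨅ γ ∈ {γ : Measure ((Fin n → ℝ) × (Fin n → ℝ)) |
          γ.map Prod.fst = (Measure.pi fun _ : Fin n => gaussianReal 0 1).map
            (fun a l => Δ1 l (a l)) ∧
          γ.map Prod.snd = Measure.pi fun _ : Fin n => gaussianReal 0 1},
        ∑ l, ENNReal.ofReal (lam l) * ∫⁻ z, ENNReal.ofReal ((z.1 l - z.2 l)^2) ∂γ)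
      = ∑ l, ENNReal.ofReal (lam l) *
          ⨅ δ ∈ {δ : Measure (ℝ × ℝ) |
            δ.map Prod.fst = (gaussianReal 0 1).map (Δ1 l) ∧
            δ.map Prod.snd = gaussianReal 0 1},
          ∫⁻ p, ENNReal.ofReal ((p.1 - p.2)^2) ∂δ := by
    apply le_antisymm
    · -- upper bound via near-optimal product couplings
      refine ENNReal.le_of_forall_pos_le_add fun ε hε hb => ?_
      have hKne : ∀ l, (⨅ δ ∈ {δ : Measure (ℝ × ℝ) |
            δ.map Prod.fst = (gaussianReal 0 1).map (Δ1 l) ∧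
            δ.map Prod.snd = gaussianReal 0 1},
          ∫⁻ p, ENNReal.ofReal ((p.1 - p.2)^2) ∂δ) ≠ ⊤ := by
        intro l hc
        have h1 := ENNReal.sum_lt_top.mp hb l (Finset.mem_univ l)
        rw [hc, ENNReal.mul_top (ENNReal.ofReal_pos.mpr (hlam l)).ne'] at h1
        exact lt_irrefl ⊤ h1
      have hchoice : ∀ l, ∃ δ : Measure (ℝ × ℝ),
          (δ.map Prod.fst = (gaussianReal 0 1).map (Δ1 l) ∧
            δ.map Prod.snd = gaussianReal 0 1) ∧
          ∫⁻ p, ENNReal.ofReal ((p.1 - p.2)^2) ∂δ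
            ≤ (⨅ δ ∈ {δ : Measure (ℝ × ℝ) |
                δ.map Prod.fst = (gaussianReal 0 1).map (Δ1 l) ∧
                δ.map Prod.snd = gaussianReal 0 1},
              ∫⁻ p, ENNReal.ofReal ((p.1 - p.2)^2) ∂δ)
              + (ENNReal.ofReal (lam l))⁻¹ * ((ε : ℝ≥0∞) / (n : ℝ≥0∞)) := by
        intro l
        have hnne : ((ε : ℝ≥0∞) / (n : ℝ≥0∞)) ≠ 0 := by
          intro hc
          rcases ENNReal.div_eq_zero_iff.mp hc with hc1 | hc2
          · exact (ENNReal.coe_ne_zero.mpr hε.ne') hc1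
          · exact (ENNReal.natCast_ne_top n) hc2
        have hεl : (ENNReal.ofReal (lam l))⁻¹ * ((ε : ℝ≥0∞) / (n : ℝ≥0∞)) ≠ 0 :=
          mul_ne_zero (ENNReal.inv_ne_zero.mpr ENNReal.ofReal_ne_top) hnne
        have hlt := ENNReal.lt_add_right (hKne l) hεl
        rw [iInf_lt_iff] at hlt
        obtain ⟨δ, hδ⟩ := hlt
        rw [iInf_lt_iff] at hδ
        obtain ⟨hmem, hlt2⟩ := hδ
        exact ⟨δ, hmem, hlt2.le⟩
      choose δf hδmem hδcost using hchoice
      haveI hδprob : ∀ l, IsProbabilityMeasure (δf l) := by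
        intro l
        constructor
        have h2 : (δf l) Set.univ = ((δf l).map Prod.fst) Set.univ := by
          rw [Measure.map_apply measurable_fst MeasurableSet.univ, Set.preimage_univ]
        rw [h2, (hδmem l).1]
        exact measure_univ
      have hrm : Measurable (fun h : Fin n → ℝ × ℝ =>
          ((fun l => (h l).1, fun l => (h l).2) : (Fin n → ℝ) × (Fin n → ℝ))) :=
        (measurable_pi_iff.mpr fun l => measurable_fst.comp (measurable_pi_apply l)).prodMk
          (measurable_pi_iff.mpr fun l => measurable_snd.comp (measurable_pi_apply l))
      have hmem1 : ((Measure.pi δf).map (fun h : Fin n → ℝ × ℝ =>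
            ((fun l => (h l).1, fun l => (h l).2) : (Fin n → ℝ) × (Fin n → ℝ)))).map Prod.fst
          = (Measure.pi fun _ : Fin n => gaussianReal 0 1).map (fun a l => Δ1 l (a l)) := by
        rw [Measure.map_map measurable_fst hrm]
        have e : (Prod.fst ∘ fun h : Fin n → ℝ × ℝ =>
            ((fun l => (h l).1, fun l => (h l).2) : (Fin n → ℝ) × (Fin n → ℝ)))
            = fun (h : Fin n → ℝ × ℝ) l => (h l).1 := rfl
        rw [e, myPi_map_pi δf (fun _ => Prod.fst) (fun _ => measurable_fst), hmargΔ]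
        congr 1
        funext l
        exact (hδmem l).1
      have hmem2 : ((Measure.pi δf).map (fun h : Fin n → ℝ × ℝ =>
            ((fun l => (h l).1, fun l => (h l).2) : (Fin n → ℝ) × (Fin n → ℝ)))).map Prod.snd
          = (Measure.pi fun _ : Fin n => gaussianReal 0 1) := by
        rw [Measure.map_map measurable_snd hrm]
        have e : (Prod.snd ∘ fun h : Fin n → ℝ × ℝ =>
            ((fun l => (h l).1, fun l => (h l).2) : (Fin n → ℝ) × (Fin n → ℝ)))
            = fun (h : Fin n → ℝ × ℝ) l => (h l).2 := rfl
        rw [e, myPi_map_pi δf (fun _ => Prod.snd) (fun _ => measurable_snd)]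
        congr 1
        funext l
        exact (hδmem l).2
      have hIγ0 : ∀ l, (∫⁻ z, ENNReal.ofReal ((z.1 l - z.2 l)^2)
            ∂((Measure.pi δf).map (fun h : Fin n → ℝ × ℝ =>
              ((fun l => (h l).1, fun l => (h l).2) : (Fin n → ℝ) × (Fin n → ℝ)))))
          = ∫⁻ p, ENNReal.ofReal ((p.1 - p.2)^2) ∂(δf l) := by
        intro l
        rw [lintegral_map (hIl l) hrm]
        have e2 : (∫⁻ h : Fin n → ℝ × ℝ, ENNReal.ofReal (((h l).1 - (h l).2)^2)
              ∂(Measure.pi δf))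
            = ∫⁻ p, ENNReal.ofReal ((p.1 - p.2)^2) ∂((Measure.pi δf).map (Function.eval l)) :=
          (lintegral_map hC1 (measurable_pi_apply l)).symm
        rw [show (∫⁻ h : Fin n → ℝ × ℝ, ENNReal.ofReal
            ((((fun l => (h l).1, fun l => (h l).2) : (Fin n → ℝ) × (Fin n → ℝ)).1 l
              - ((fun l => (h l).1, fun l => (h l).2) : (Fin n → ℝ) × (Fin n → ℝ)).2 l)^2)
            ∂(Measure.pi δf))
          = ∫⁻ h : Fin n → ℝ × ℝ, ENNReal.ofReal (((h l).1 - (h l).2)^2) ∂(Measure.pi δf)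
          from rfl]
        rw [e2, myPi_map_eval δf l]
      refine le_trans (iInf₂_le ((Measure.pi δf).map (fun h : Fin n → ℝ × ℝ =>
        ((fun l => (h l).1, fun l => (h l).2) : (Fin n → ℝ) × (Fin n → ℝ))))
        ⟨hmem1, hmem2⟩) ?_
      calc (∑ l, ENNReal.ofReal (lam l) * ∫⁻ z, ENNReal.ofReal ((z.1 l - z.2 l)^2)
            ∂((Measure.pi δf).map (fun h : Fin n → ℝ × ℝ =>
              ((fun l => (h l).1, fun l => (h l).2) : (Fin n → ℝ) × (Fin n → ℝ)))))
          ≤ ∑ l, (ENNReal.ofReal (lam l) *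
              (⨅ δ ∈ {δ : Measure (ℝ × ℝ) |
                δ.map Prod.fst = (gaussianReal 0 1).map (Δ1 l) ∧
                δ.map Prod.snd = gaussianReal 0 1},
              ∫⁻ p, ENNReal.ofReal ((p.1 - p.2)^2) ∂δ)
              + (ε : ℝ≥0∞) / (n : ℝ≥0∞)) := by
            refine Finset.sum_le_sum fun l _ => ?_
            rw [hIγ0 l]
            refine le_trans (mul_le_mul_right (hδcost l) _) (le_of_eq ?_)
            rw [mul_add, ← mul_assoc,
              ENNReal.mul_inv_cancel (ENNReal.ofReal_pos.mpr (hlam l)).ne'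
                ENNReal.ofReal_ne_top, one_mul]
        _ = (∑ l, ENNReal.ofReal (lam l) *
              ⨅ δ ∈ {δ : Measure (ℝ × ℝ) |
                δ.map Prod.fst = (gaussianReal 0 1).map (Δ1 l) ∧
                δ.map Prod.snd = gaussianReal 0 1},
              ∫⁻ p, ENNReal.ofReal ((p.1 - p.2)^2) ∂δ)
            + (n : ℝ≥0∞) * ((ε : ℝ≥0∞) / (n : ℝ≥0∞)) := by
            rw [Finset.sum_add_distrib, Finset.sum_const, Finset.card_univ,
              Fintype.card_fin, nsmul_eq_mul]
        _ ≤ (∑ l, ENNReal.ofReal (lam l) *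
              ⨅ δ ∈ {δ : Measure (ℝ × ℝ) |
                δ.map Prod.fst = (gaussianReal 0 1).map (Δ1 l) ∧
                δ.map Prod.snd = gaussianReal 0 1},
              ∫⁻ p, ENNReal.ofReal ((p.1 - p.2)^2) ∂δ) + (ε : ℝ≥0∞) :=
            add_le_add_right ENNReal.mul_div_le _
    · -- lower bound via coordinate marginals
      refine le_iInf₂ fun γ hγ => ?_
      exact Finset.sum_le_sum fun l _ => mul_le_mul_right (hK_le γ hγ.1 hγ.2 l) _
  have t5 : (∑ l, ENNReal.ofReal (lam l) *
          ⨅ δ ∈ {δ : Measure (ℝ × ℝ) |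
            δ.map Prod.fst = (gaussianReal 0 1).map (Δ1 l) ∧
            δ.map Prod.snd = gaussianReal 0 1},
          ∫⁻ p, ENNReal.ofReal ((p.1 - p.2)^2) ∂δ)
      = ∑ l, ENNReal.ofReal (lam l) *
          Wp 2 ((gaussianReal 0 1).map (Δ1 l)) (gaussianReal 0 1) ^ (2:ℝ) := by
    refine Finset.sum_congr rfl fun l _ => ?_
    congr 1
    rw [Wp_two_sq]
    exact iInf_congr fun δ => iInf_congr fun _ =>
      lintegral_congr fun p => (cost1d p.1 p.2).symm
  rw [hμq, hgaussφ]
  exact t1.trans (t2.trans (t3.trans (t4.trans t5)))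
end

section
/- (Wasserstein distance under stochastic linear operations.) Let p_w be a Borel probability distribution over pairs (W, b) ∈ ℝ^{m×n} × ℝ^m with E[‖W‖^ρ] < ∞ for ρ ∈ {1,2}, where ‖·‖ is the spectral norm. For a Borel probability measure p on ℝⁿ with finite ρ-th moment, let P(p) denote the law of W z + b where (W, b) ∼ p_w and z ∼ p are independent. Then for all Borel probability measures p, q on ℝⁿ with finite ρ-th moments: W_ρ( P(p), P(q) ) ≤ E_{(W,b)∼p_w}[ ‖W‖^ρ ]^{1/ρ} · W_ρ(p, q). -/
open MeasureTheory
open scoped ENNReal NNReal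

lemma rpow_iInf_aux {ι : Sort*} (f : ι → ℝ≥0∞) {y : ℝ} (hy : 0 < y) :
    (⨅ i, f i) ^ y = ⨅ i, f i ^ y := by
  have h := OrderIso.map_iInf (ENNReal.orderIsoRpow y hy) f
  simp only [ENNReal.orderIsoRpow_apply] at h
  exact h

set_option maxHeartbeats 1000000 in
set_option synthInstance.maxHeartbeats 1000000 in

/-- Wasserstein distance under stochastic linear operations: pushing two input
distributions through the same random affine map `z ↦ W z + b` contracts the
`ρ`-Wasserstein distance by at most `E[‖W‖^ρ]^{1/ρ}`. -/
theorem wasserstein_stochastic_linear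
    (ρ : ℝ) (hρ : ρ = 1 ∨ ρ = 2) (n m : ℕ)
    (pw : Measure ((EuclideanSpace ℝ (Fin n) →L[ℝ] EuclideanSpace ℝ (Fin m)) ×
      EuclideanSpace ℝ (Fin m)))
    [IsProbabilityMeasure pw]
    (hmom : ∫⁻ wb, (‖wb.1‖₊ : ℝ≥0∞) ^ ρ ∂pw < ⊤)
    (p q : Measure (EuclideanSpace ℝ (Fin n)))
    [IsProbabilityMeasure p] [IsProbabilityMeasure q]
    (hpm : ∫⁻ z, (‖z‖₊ : ℝ≥0∞) ^ ρ ∂p < ⊤)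
    (hqm : ∫⁻ z, (‖z‖₊ : ℝ≥0∞) ^ ρ ∂q < ⊤) :
    Wp ρ ((pw.prod p).map (fun wbz => wbz.1.1 wbz.2 + wbz.1.2))
        ((pw.prod q).map (fun wbz => wbz.1.1 wbz.2 + wbz.1.2))
      ≤ (∫⁻ wb, (‖wb.1‖₊ : ℝ≥0∞) ^ ρ ∂pw) ^ (1/ρ) * Wp ρ p q := by
  classical
  have hρpos : (0:ℝ) < ρ := by rcases hρ with h | h <;> norm_num [h]
  have hinv : (0:ℝ) < 1/ρ := by positivity
  set E := EuclideanSpace ℝ (Fin n)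
  set F := EuclideanSpace ℝ (Fin m)
  haveI : BorelSpace (E →L[ℝ] F) := ⟨rfl⟩
  set M : ℝ≥0∞ := ∫⁻ wb, (‖wb.1‖₊ : ℝ≥0∞) ^ ρ ∂pw with hM
  have hMtop : M ≠ ⊤ := hmom.ne
  set g : ((E →L[ℝ] F) × F) × E → F := fun x => x.1.1 x.2 + x.1.2 with hgdef
  have hgm : Measurable g := by
    have h : Continuous g := by
      exact (isBoundedBilinearMap_apply.continuous.comp
        (continuous_fst.fst.prodMk continuous_snd)).add continuous_fst.snd
    exact h.measurable
  -- the set of couplings of p and q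
  set S := {γ : Measure (E × E) | γ.map Prod.fst = p ∧ γ.map Prod.snd = q} with hS
  have hSne : Nonempty S := by
    refine ⟨⟨p.prod q, ?_, ?_⟩⟩ <;> simp [measure_univ]
  -- cost of a coupling
  set cE : Measure (E × E) → ℝ≥0∞ := fun γ => ∫⁻ z, (‖z.1 - z.2‖₊ : ℝ≥0∞) ^ ρ ∂γ
  have hcostFmeas : Measurable (fun z : F × F => (‖z.1 - z.2‖₊ : ℝ≥0∞) ^ ρ) :=
    ((measurable_fst.sub measurable_snd).nnnorm.coe_nnreal_ennreal).pow_const ρ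
  -- key step
  have key : ∀ γ ∈ S,
      Wp ρ ((pw.prod p).map g) ((pw.prod q).map g) ≤ M ^ (1/ρ) * (cE γ) ^ (1/ρ) := by
    intro γ hγ
    obtain ⟨hγ1, hγ2⟩ := hγ
    haveI : IsProbabilityMeasure γ := by
      constructor
      have := congrArg (fun μ : Measure E => μ Set.univ) hγ1
      simpa [Measure.map_apply measurable_fst MeasurableSet.univ] using this
    set f : ((E →L[ℝ] F) × F) × (E × E) → F × F :=
      fun x => (g (x.1, x.2.1), g (x.1, x.2.2)) with hfdef
    have hfm : Measurable f :=
      (hgm.comp (measurable_fst.prodMk measurable_snd.fst)).prodMk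
        (hgm.comp (measurable_fst.prodMk measurable_snd.snd))
    set γ' : Measure (F × F) := (pw.prod γ).map f with hγ'def
    have hmem1 : γ'.map Prod.fst = (pw.prod p).map g := by
      rw [hγ'def, Measure.map_map measurable_fst hfm]
      have h1 : (Prod.fst ∘ f) = g ∘ (Prod.map id Prod.fst) := rfl
      rw [h1, ← Measure.map_map hgm (measurable_id.prodMap measurable_fst),
        ← Measure.map_prod_map _ _ measurable_id measurable_fst, Measure.map_id, hγ1]
    have hmem2 : γ'.map Prod.snd = (pw.prod q).map g := by
      rw [hγ'def, Measure.map_map measurable_snd hfm]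
      have h1 : (Prod.snd ∘ f) = g ∘ (Prod.map id Prod.snd) := rfl
      rw [h1, ← Measure.map_map hgm (measurable_id.prodMap measurable_snd),
        ← Measure.map_prod_map _ _ measurable_id measurable_snd, Measure.map_id, hγ2]
    have hcost : (∫⁻ z, (‖z.1 - z.2‖₊ : ℝ≥0∞) ^ ρ ∂γ') ≤ M * cE γ := by
      rw [hγ'def, lintegral_map hcostFmeas hfm]
      calc ∫⁻ x, (‖(f x).1 - (f x).2‖₊ : ℝ≥0∞) ^ ρ ∂(pw.prod γ)
          ≤ ∫⁻ x, (‖x.1.1‖₊ : ℝ≥0∞) ^ ρ * (‖x.2.1 - x.2.2‖₊ : ℝ≥0∞) ^ ρ ∂(pw.prod γ) := by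
            refine lintegral_mono fun x => ?_
            have hb : ‖(f x).1 - (f x).2‖₊ ≤ ‖x.1.1‖₊ * ‖x.2.1 - x.2.2‖₊ := by
              have : (f x).1 - (f x).2 = x.1.1 (x.2.1 - x.2.2) := by
                simp [hfdef, hgdef, map_sub]
              rw [this]
              exact x.1.1.le_opNNNorm _
            calc (‖(f x).1 - (f x).2‖₊ : ℝ≥0∞) ^ ρ
                ≤ ((‖x.1.1‖₊ * ‖x.2.1 - x.2.2‖₊ : ℝ≥0) : ℝ≥0∞) ^ ρ := by
                  exact ENNReal.rpow_le_rpow (ENNReal.coe_le_coe.2 hb) hρpos.le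
              _ = (‖x.1.1‖₊ : ℝ≥0∞) ^ ρ * (‖x.2.1 - x.2.2‖₊ : ℝ≥0∞) ^ ρ := by
                  rw [ENNReal.coe_mul, ENNReal.mul_rpow_of_nonneg _ _ hρpos.le]
        _ = M * cE γ := by
            exact lintegral_prod_mul
              (f := fun wb : (E →L[ℝ] F) × F => (‖wb.1‖₊ : ℝ≥0∞) ^ ρ)
              (g := fun z : E × E => (‖z.1 - z.2‖₊ : ℝ≥0∞) ^ ρ)
              (measurable_fst.nnnorm.coe_nnreal_ennreal.pow_const ρ).aemeasurable
              (((measurable_fst.sub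
                measurable_snd).nnnorm.coe_nnreal_ennreal).pow_const ρ).aemeasurable
    calc Wp ρ ((pw.prod p).map g) ((pw.prod q).map g)
        ≤ (∫⁻ z, (‖z.1 - z.2‖₊ : ℝ≥0∞) ^ ρ ∂γ') ^ (1/ρ) := by
          refine ENNReal.rpow_le_rpow ?_ hinv.le
          exact iInf₂_le γ' ⟨hmem1, hmem2⟩
      _ ≤ (M * cE γ) ^ (1/ρ) := ENNReal.rpow_le_rpow hcost hinv.le
      _ = M ^ (1/ρ) * (cE γ) ^ (1/ρ) := ENNReal.mul_rpow_of_nonneg _ _ hinv.le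
  -- conclude
  have hWq : M ^ (1/ρ) * Wp ρ p q = ⨅ x : S, M ^ (1/ρ) * (cE x) ^ (1/ρ) := by
    rw [Wp, iInf_subtype', rpow_iInf_aux _ hinv,
      ENNReal.mul_iInf (fun h _ => absurd h (ENNReal.rpow_ne_top_of_nonneg hinv.le hMtop))]
  rw [hWq]
  exact le_iInf fun x => key x x.2
end

section
/- (Upper bound on the 2-Wasserstein distance between mixture distributions.) Let p = Σ_{i=1}^M α_i p_i and q = Σ_{j=1}^N β_j q_j be finite mixtures of Borel probability measures on ℝ^d with finite second moments, where α ∈ ℝ^M and β ∈ ℝ^N are probability vectors. Let π̄ ∈ ℝ^{M×N} be any matrix with nonnegative entries whose row sums equal α and whose column sums equal β (a coupling of the mixture weights). Then W_2^2( Σ_{i=1}^M α_i p_i , Σ_{j=1}^N β_j q_j ) ≤ Σ_{i=1}^M Σ_{j=1}^N π̄_{ij} · W_2^2( p_i, q_j ). -/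
open MeasureTheory
open scoped ENNReal NNReal

private lemma map_finset_sum' {α β ι : Type*} [MeasurableSpace α] [MeasurableSpace β]
    {f : α → β} (hf : Measurable f) (s : Finset ι) (μ : ι → Measure α) :
    (∑ i ∈ s, μ i).map f = ∑ i ∈ s, (μ i).map f := by
  classical
  induction s using Finset.induction with
  | empty => simp
  | insert _ _ h ih =>
    rw [Finset.sum_insert h, Finset.sum_insert h, Measure.map_add _ _ hf, ih]

private lemma sq_of_Wp (x : ℝ≥0∞) : (x ^ (1 / (2:ℝ))) ^ (2:ℝ) = x := by
  rw [← ENNReal.rpow_mul]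
  norm_num

/-- Upper bound on the squared 2-Wasserstein distance between two finite
mixtures in terms of any coupling `π̄` of the mixture weights. -/
theorem wasserstein_mixture_bound
    (d M N : ℕ)
    (p : Fin M → Measure (EuclideanSpace ℝ (Fin d)))
    (q : Fin N → Measure (EuclideanSpace ℝ (Fin d)))
    [∀ i, IsProbabilityMeasure (p i)] [∀ j, IsProbabilityMeasure (q j)]
    (hpm : ∀ i, ∫⁻ z, (‖z‖₊ : ℝ≥0∞) ^ (2 : ℝ) ∂(p i) < ⊤)
    (hqm : ∀ j, ∫⁻ z, (‖z‖₊ : ℝ≥0∞) ^ (2 : ℝ) ∂(q j) < ⊤)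
    (α : Fin M → ℝ≥0) (β : Fin N → ℝ≥0)
    (hα : ∑ i, α i = 1) (hβ : ∑ j, β j = 1)
    (pibar : Fin M → Fin N → ℝ≥0)
    (hrow : ∀ i, ∑ j, pibar i j = α i)
    (hcol : ∀ j, ∑ i, pibar i j = β j) :
    Wp 2 (∑ i, (α i : ℝ≥0∞) • p i) (∑ j, (β j : ℝ≥0∞) • q j) ^ (2 : ℝ)
      ≤ ∑ i, ∑ j, (pibar i j : ℝ≥0∞) * Wp 2 (p i) (q j) ^ (2 : ℝ) := by
  classical
  -- cost functional and pairwise infima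
  set I : Measure (EuclideanSpace ℝ (Fin d) × EuclideanSpace ℝ (Fin d)) → ℝ≥0∞ :=
    fun γ => ∫⁻ z, (‖z.1 - z.2‖₊ : ENNReal) ^ (2:ℝ) ∂γ with hI
  have hWp : ∀ (P Q : Measure (EuclideanSpace ℝ (Fin d))),
      Wp 2 P Q ^ (2:ℝ)
        = ⨅ γ ∈ {γ : Measure (EuclideanSpace ℝ (Fin d) × EuclideanSpace ℝ (Fin d)) |
            γ.map Prod.fst = P ∧ γ.map Prod.snd = Q}, I γ := by
    intro P Q
    rw [Wp, sq_of_Wp]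
  set D : Fin M → Fin N → ℝ≥0∞ := fun i j =>
    ⨅ γ ∈ {γ : Measure (EuclideanSpace ℝ (Fin d) × EuclideanSpace ℝ (Fin d)) |
        γ.map Prod.fst = p i ∧ γ.map Prod.snd = q j}, I γ with hD
  simp only [hWp]
  -- trivial if RHS is infinite
  by_cases hfin : (∑ i, ∑ j, (pibar i j : ℝ≥0∞) * D i j) = ⊤
  · rw [hfin]; exact le_top
  refine ENNReal.le_of_forall_pos_le_add (fun ε hε _ => ?_)
  -- choose near-optimal couplings
  have hex : ∀ i j, ∃ γ : Measure (EuclideanSpace ℝ (Fin d) × EuclideanSpace ℝ (Fin d)),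
      (γ.map Prod.fst = p i ∧ γ.map Prod.snd = q j) ∧
      (pibar i j : ℝ≥0∞) * I γ ≤ (pibar i j : ℝ≥0∞) * (D i j + ε) := by
    intro i j
    by_cases hz : pibar i j = 0
    · refine ⟨(p i).prod (q j), ⟨?_, ?_⟩, by simp [hz]⟩
      · exact Measure.fst_prod (μ := p i) (ν := q j)
      · exact Measure.snd_prod (μ := p i) (ν := q j)
    · have hDne : D i j ≠ ⊤ := by
        intro hDt
        apply hfin
        rw [eq_top_iff]
        calc (⊤ : ℝ≥0∞) = (pibar i j : ℝ≥0∞) * D i j := by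
              rw [hDt, ENNReal.mul_top (by exact_mod_cast hz)]
          _ ≤ ∑ j', (pibar i j' : ℝ≥0∞) * D i j' :=
              Finset.single_le_sum (f := fun j' => (pibar i j' : ℝ≥0∞) * D i j')
                (fun _ _ => zero_le) (Finset.mem_univ j)
          _ ≤ _ := Finset.single_le_sum
                (f := fun i' => ∑ j', (pibar i' j' : ℝ≥0∞) * D i' j')
                (fun _ _ => zero_le) (Finset.mem_univ i)
      have hlt : D i j < D i j + ε :=
        ENNReal.lt_add_right hDne (by exact_mod_cast hε.ne')
      rw [hD] at hlt
      simp only [iInf_lt_iff, Set.mem_setOf_eq] at hlt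
      obtain ⟨γ, hγmem, hγlt⟩ := hlt
      exact ⟨γ, hγmem, mul_le_mul_right hγlt.le _⟩
  choose γsel hγmem hγle using hex
  -- the mixture coupling
  set γ : Measure (EuclideanSpace ℝ (Fin d) × EuclideanSpace ℝ (Fin d)) :=
    ∑ i, ∑ j, (pibar i j : ℝ≥0∞) • γsel i j with hγ
  have hmfst : Measurable (Prod.fst : (EuclideanSpace ℝ (Fin d) × EuclideanSpace ℝ (Fin d)) →
      EuclideanSpace ℝ (Fin d)) := measurable_fst
  have hmsnd : Measurable (Prod.snd : (EuclideanSpace ℝ (Fin d) × EuclideanSpace ℝ (Fin d)) →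
      EuclideanSpace ℝ (Fin d)) := measurable_snd
  have hγfst : γ.map Prod.fst = ∑ i, (α i : ℝ≥0∞) • p i := by
    rw [hγ, map_finset_sum' hmfst]
    refine Finset.sum_congr rfl (fun i _ => ?_)
    rw [map_finset_sum' hmfst]
    have : ∀ j ∈ Finset.univ, ((pibar i j : ℝ≥0∞) • γsel i j).map Prod.fst
        = (pibar i j : ℝ≥0∞) • p i := by
      intro j _
      rw [Measure.map_smul, (hγmem i j).1]
    rw [Finset.sum_congr rfl this, ← Finset.sum_smul, ← ENNReal.coe_finset_sum, hrow i]
  have hγsnd : γ.map Prod.snd = ∑ j, (β j : ℝ≥0∞) • q j := by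
    rw [hγ, map_finset_sum' hmsnd]
    have : ∀ i ∈ Finset.univ, (∑ j, (pibar i j : ℝ≥0∞) • γsel i j).map Prod.snd
        = ∑ j, (pibar i j : ℝ≥0∞) • q j := by
      intro i _
      rw [map_finset_sum' hmsnd]
      refine Finset.sum_congr rfl (fun j _ => ?_)
      rw [Measure.map_smul, (hγmem i j).2]
    rw [Finset.sum_congr rfl this, Finset.sum_comm]
    refine Finset.sum_congr rfl (fun j _ => ?_)
    rw [← Finset.sum_smul, ← ENNReal.coe_finset_sum, hcol j]
  -- the infimum is at most the cost of γ
  have hle1 : (⨅ γ' ∈ {γ' : Measure (EuclideanSpace ℝ (Fin d) × EuclideanSpace ℝ (Fin d)) |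
      γ'.map Prod.fst = ∑ i, (α i : ℝ≥0∞) • p i ∧
      γ'.map Prod.snd = ∑ j, (β j : ℝ≥0∞) • q j}, I γ') ≤ I γ :=
    iInf₂_le γ ⟨hγfst, hγsnd⟩
  -- compute the cost of γ
  have hIγ : I γ = ∑ i, ∑ j, (pibar i j : ℝ≥0∞) * I (γsel i j) := by
    simp only [hI, hγ, lintegral_finset_sum_measure, lintegral_smul_measure, smul_eq_mul]
  refine hle1.trans ?_
  rw [hIγ]
  calc ∑ i, ∑ j, (pibar i j : ℝ≥0∞) * I (γsel i j)
      ≤ ∑ i, ∑ j, (pibar i j : ℝ≥0∞) * (D i j + ε) :=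
        Finset.sum_le_sum (fun i _ => Finset.sum_le_sum (fun j _ => hγle i j))
    _ = ∑ i, ∑ j, ((pibar i j : ℝ≥0∞) * D i j + (pibar i j : ℝ≥0∞) * ε) := by
        simp [mul_add]
    _ = (∑ i, ∑ j, (pibar i j : ℝ≥0∞) * D i j)
          + (∑ i, ∑ j, (pibar i j : ℝ≥0∞)) * ε := by
        simp only [Finset.sum_add_distrib, Finset.sum_mul]
    _ = (∑ i, ∑ j, (pibar i j : ℝ≥0∞) * D i j) + ε := by
        congr 1
        have : (∑ i, ∑ j, (pibar i j : ℝ≥0∞)) = 1 := by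
          have : (∑ i, ∑ j, (pibar i j : ℝ≥0∞)) = ((∑ i, ∑ j, pibar i j : ℝ≥0) : ℝ≥0∞) := by
            push_cast; rfl
          rw [this]
          simp [hrow, hα]
        rw [this, one_mul]
end

section
/- (2-Wasserstein distance between product measures decomposes across coordinates.) Let p = p_1 ⊗ p_2 ⊗ … ⊗ p_n and q = q_1 ⊗ q_2 ⊗ … ⊗ q_n be product probability measures on ℝⁿ, where each p_i, q_i is a Borel probability measure on ℝ with finite second moment. Then W_2^2(p, q) = Σ_{i=1}^n W_2^2(p_i, q_i). -/
open MeasureTheory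
open scoped ENNReal NNReal

namespace WPaux

/-- The quadratic transport cost of a plan. -/
noncomputable def C {E : Type*} [NormedAddCommGroup E] [MeasurableSpace E]
    (γ : Measure (E × E)) : ℝ≥0∞ :=
  ∫⁻ z, (‖z.1 - z.2‖₊ : ENNReal) ^ (2 : ℝ) ∂γ

/-- The squared 2-Wasserstein distance as an infimum over couplings. -/
noncomputable def I {E : Type*} [NormedAddCommGroup E] [MeasurableSpace E]
    (p q : Measure E) : ℝ≥0∞ :=
  ⨅ γ ∈ {γ : Measure (E × E) | γ.map Prod.fst = p ∧ γ.map Prod.snd = q}, C γ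

lemma Wp_two_sq {E : Type*} [NormedAddCommGroup E] [MeasurableSpace E]
    (p q : Measure E) : Wp 2 p q ^ (2 : ℝ) = I p q := by
  have : Wp 2 p q = (I p q) ^ (1/(2:ℝ)) := rfl
  rw [this, ← ENNReal.rpow_mul]
  norm_num

lemma rpow_two_eq (x : ℝ≥0∞) : x ^ (2 : ℝ) = x * x := by
  rw [show (2:ℝ) = ((2:ℕ):ℝ) by norm_num, ENNReal.rpow_natCast]
  ring

lemma measurable_cost2 {E : Type*} [NormedAddCommGroup E] [MeasurableSpace E]
    [BorelSpace E] [SecondCountableTopology E] :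
    Measurable fun z : E × E => (‖z.1 - z.2‖₊ : ℝ≥0∞) ^ (2 : ℝ) := by
  simp_rw [rpow_two_eq]
  have h : Measurable fun z : E × E => (‖z.1 - z.2‖₊ : ℝ≥0∞) :=
    ((measurable_fst.sub measurable_snd).nnnorm).coe_nnreal_ennreal
  exact h.mul h

lemma measurable_toE {n : ℕ} : Measurable (toE (n := n)) :=
  (MeasurableEquiv.toLp 2 (Fin n → ℝ)).measurable

lemma toE_apply {n : ℕ} (f : Fin n → ℝ) (i : Fin n) : toE f i = f i := rfl

lemma measurable_evalE {n : ℕ} (i : Fin n) :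
    Measurable fun x : EuclideanSpace ℝ (Fin n) => x i :=
  ((measurable_pi_apply i).comp (MeasurableEquiv.toLp 2 (Fin n → ℝ)).symm.measurable)

/-- pointwise decomposition of the squared euclidean norm -/
lemma sq_nnnorm_eq {n : ℕ} (x : EuclideanSpace ℝ (Fin n)) :
    (‖x‖₊ : ℝ≥0∞) ^ (2 : ℝ) = ∑ i, (‖x i‖₊ : ℝ≥0∞) ^ (2 : ℝ) := by
  have h : ‖x‖₊ ^ 2 = ∑ i, ‖x i‖₊ ^ 2 := by
    rw [EuclideanSpace.nnnorm_eq, NNReal.sq_sqrt]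
  have e2 : ∀ a : ℝ≥0, ((a : ℝ≥0∞)) ^ (2:ℝ) = ((a ^ 2 : ℝ≥0) : ℝ≥0∞) := by
    intro a
    rw [show (2:ℝ) = ((2:ℕ):ℝ) by norm_num, ENNReal.rpow_natCast, ENNReal.coe_pow]
  simp_rw [e2, ← ENNReal.coe_finset_sum, h]

/-- marginal of a finite product of probability measures -/
lemma map_eval_pi {ι : Type*} [Fintype ι] [DecidableEq ι] {α : ι → Type*}
    [∀ i, MeasurableSpace (α i)] (μ : ∀ i, Measure (α i))
    [∀ i, IsProbabilityMeasure (μ i)] (i : ι) :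
    (Measure.pi μ).map (Function.eval i) = μ i := by
  ext s hs
  rw [Measure.map_apply (measurable_pi_apply i) hs, Set.eval_preimage,
    Measure.pi_pi]
  rw [Finset.prod_eq_single i
    (fun j _ hj => by rw [Function.update_of_ne hj]; exact measure_univ)
    (fun h => absurd (Finset.mem_univ i) h)]
  rw [Function.update_self]

lemma isProbCoupling {E : Type*} [MeasurableSpace E] {p : Measure E}
    [IsProbabilityMeasure p] {γ : Measure (E × E)}
    (h : γ.map Prod.fst = p) : IsProbabilityMeasure γ := by
  constructor
  have := congrArg (fun μ : Measure E => μ Set.univ) h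
  simpa [Measure.map_apply measurable_fst MeasurableSet.univ] using this

/-- lower bound: sum of coordinate costs is below the cost of any coupling of
the product measures -/
lemma sum_I_le {n : ℕ} (p q : Fin n → Measure ℝ)
    [∀ i, IsProbabilityMeasure (p i)] [∀ i, IsProbabilityMeasure (q i)]
    (γ : Measure (EuclideanSpace ℝ (Fin n) × EuclideanSpace ℝ (Fin n)))
    (h1 : γ.map Prod.fst = (Measure.pi p).map toE)
    (h2 : γ.map Prod.snd = (Measure.pi q).map toE) :
    ∑ i, I (p i) (q i) ≤ C γ := by
  classical
  -- coordinate couplings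
  set E := EuclideanSpace ℝ (Fin n)
  have hπ : ∀ i : Fin n, Measurable fun z : E × E => (z.1 i, z.2 i) := fun i =>
    ((measurable_evalE i).comp measurable_fst).prodMk
      ((measurable_evalE i).comp measurable_snd)
  have hcost : ∀ i : Fin n,
      Measurable fun z : E × E => (‖z.1 i - z.2 i‖₊ : ℝ≥0∞) ^ (2:ℝ) := by
    intro i
    exact (measurable_cost2 (E := ℝ)).comp (hπ i)
  have key : C γ = ∑ i, ∫⁻ z, (‖z.1 i - z.2 i‖₊ : ℝ≥0∞) ^ (2:ℝ) ∂γ := by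
    rw [C]
    have : ∀ z : E × E, (‖z.1 - z.2‖₊ : ℝ≥0∞) ^ (2:ℝ)
        = ∑ i, (‖z.1 i - z.2 i‖₊ : ℝ≥0∞) ^ (2:ℝ) := by
      intro z
      rw [sq_nnnorm_eq]
      congr 1
    simp_rw [this]
    rw [lintegral_finset_sum _ (fun i _ => hcost i)]
  rw [key]
  refine Finset.sum_le_sum fun i _ => ?_
  -- the i-th coordinate coupling
  set γi : Measure (ℝ × ℝ) := γ.map fun z : E × E => (z.1 i, z.2 i) with hγi
  have hm1 : γi.map Prod.fst = p i := by
    rw [hγi, Measure.map_map measurable_fst (hπ i)]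
    have : (Prod.fst ∘ fun z : E × E => (z.1 i, z.2 i))
        = (fun x : E => x i) ∘ Prod.fst := rfl
    rw [this, ← Measure.map_map (measurable_evalE i) measurable_fst, h1,
      Measure.map_map (measurable_evalE i) measurable_toE]
    have : ((fun x : E => x i) ∘ toE) = Function.eval i := rfl
    rw [this, map_eval_pi]
  have hm2 : γi.map Prod.snd = q i := by
    rw [hγi, Measure.map_map measurable_snd (hπ i)]
    have : (Prod.snd ∘ fun z : E × E => (z.1 i, z.2 i))
        = (fun x : E => x i) ∘ Prod.snd := rfl
    rw [this, ← Measure.map_map (measurable_evalE i) measurable_snd, h2,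
      Measure.map_map (measurable_evalE i) measurable_toE]
    have : ((fun x : E => x i) ∘ toE) = Function.eval i := rfl
    rw [this, map_eval_pi]
  have hCγi : C γi = ∫⁻ z, (‖z.1 i - z.2 i‖₊ : ℝ≥0∞) ^ (2:ℝ) ∂γ := by
    rw [C, hγi, lintegral_map (measurable_cost2 (E := ℝ)) (hπ i)]
  calc I (p i) (q i) ≤ C γi := by
        refine iInf₂_le γi ?_
        exact ⟨hm1, hm2⟩
    _ = _ := hCγi

/-- upper bound via product of couplings -/
lemma I_le_sum {n : ℕ} (p q : Fin n → Measure ℝ)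
    [∀ i, IsProbabilityMeasure (p i)] [∀ i, IsProbabilityMeasure (q i)]
    (γ : Fin n → Measure (ℝ × ℝ))
    (h1 : ∀ i, (γ i).map Prod.fst = p i) (h2 : ∀ i, (γ i).map Prod.snd = q i) :
    I ((Measure.pi p).map toE) ((Measure.pi q).map toE) ≤ ∑ i, C (γ i) := by
  classical
  set E := EuclideanSpace ℝ (Fin n)
  have hprob : ∀ i, IsProbabilityMeasure (γ i) := fun i => isProbCoupling (h1 i)
  set T : (Fin n → ℝ × ℝ) → E × E :=
    fun g => (toE fun i => (g i).1, toE fun i => (g i).2) with hT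
  have hmf : Measurable fun g : Fin n → ℝ × ℝ => fun i => (g i).1 :=
    measurable_pi_lambda _ fun i => measurable_fst.comp (measurable_pi_apply i)
  have hms : Measurable fun g : Fin n → ℝ × ℝ => fun i => (g i).2 :=
    measurable_pi_lambda _ fun i => measurable_snd.comp (measurable_pi_apply i)
  have hmT : Measurable T :=
    (measurable_toE.comp hmf).prodMk (measurable_toE.comp hms)
  set Γ : Measure (E × E) := (Measure.pi γ).map T with hΓ
  have hΓ1 : Γ.map Prod.fst = (Measure.pi p).map toE := by
    rw [hΓ, Measure.map_map measurable_fst hmT]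
    have : (Prod.fst ∘ T) = toE ∘ fun g : Fin n → ℝ × ℝ => fun i => (g i).1 := rfl
    rw [this, ← Measure.map_map measurable_toE hmf]
    congr 1
    exact (measurePreserving_pi γ p fun i => ⟨measurable_fst, h1 i⟩).map_eq
  have hΓ2 : Γ.map Prod.snd = (Measure.pi q).map toE := by
    rw [hΓ, Measure.map_map measurable_snd hmT]
    have : (Prod.snd ∘ T) = toE ∘ fun g : Fin n → ℝ × ℝ => fun i => (g i).2 := rfl
    rw [this, ← Measure.map_map measurable_toE hms]
    congr 1
    exact (measurePreserving_pi γ q fun i => ⟨measurable_snd, h2 i⟩).map_eq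
  have hC : C Γ = ∑ i, C (γ i) := by
    rw [C, hΓ, lintegral_map measurable_cost2 hmT]
    have hpt : ∀ g : Fin n → ℝ × ℝ,
        (‖(T g).1 - (T g).2‖₊ : ℝ≥0∞) ^ (2:ℝ)
          = ∑ i, (‖(g i).1 - (g i).2‖₊ : ℝ≥0∞) ^ (2:ℝ) := by
      intro g
      rw [sq_nnnorm_eq]
      congr 1
    simp_rw [hpt]
    have hcoord : ∀ i : Fin n, Measurable fun g : Fin n → ℝ × ℝ =>
        (‖(g i).1 - (g i).2‖₊ : ℝ≥0∞) ^ (2:ℝ) := fun i =>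
      (measurable_cost2 (E := ℝ)).comp (measurable_pi_apply i)
    rw [lintegral_finset_sum _ (fun i _ => hcoord i)]
    refine Finset.sum_congr rfl fun i _ => ?_
    rw [← lintegral_map (measurable_cost2 (E := ℝ)) (measurable_pi_apply i),
      map_eval_pi]
    rfl
  rw [← hC]
  exact iInf₂_le Γ ⟨hΓ1, hΓ2⟩

/-- finiteness of the squared Wasserstein distance under second moments -/
lemma I_lt_top (p q : Measure ℝ) [IsProbabilityMeasure p] [IsProbabilityMeasure q]
    (hp : ∫⁻ x, (‖x‖₊ : ℝ≥0∞) ^ (2 : ℝ) ∂p < ⊤)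
    (hq : ∫⁻ x, (‖x‖₊ : ℝ≥0∞) ^ (2 : ℝ) ∂q < ⊤) : I p q < ⊤ := by
  have hcoupling : (p.prod q).map Prod.fst = p ∧ (p.prod q).map Prod.snd = q := by
    constructor
    · rw [Measure.map_fst_prod]; simp
    · rw [Measure.map_snd_prod]; simp
  have hle : I p q ≤ C (p.prod q) := iInf₂_le (p.prod q) hcoupling
  refine lt_of_le_of_lt hle ?_
  have hbound : ∀ z : ℝ × ℝ, (‖z.1 - z.2‖₊ : ℝ≥0∞) ^ (2:ℝ)
      ≤ 4 * ((‖z.1‖₊ : ℝ≥0∞) ^ (2:ℝ) + (‖z.2‖₊ : ℝ≥0∞) ^ (2:ℝ)) := by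
    intro z
    set a : ℝ≥0∞ := (‖z.1‖₊ : ℝ≥0∞)
    set b : ℝ≥0∞ := (‖z.2‖₊ : ℝ≥0∞)
    have h1 : (‖z.1 - z.2‖₊ : ℝ≥0∞) ≤ a + b :=
      (ENNReal.coe_le_coe.2 (nnnorm_sub_le z.1 z.2)).trans_eq (ENNReal.coe_add _ _)
    have h2 : a + b ≤ 2 * (a ⊔ b) := by
      rw [two_mul]
      exact add_le_add le_sup_left le_sup_right
    calc (‖z.1 - z.2‖₊ : ℝ≥0∞) ^ (2:ℝ) ≤ (2 * (a ⊔ b)) ^ (2:ℝ) :=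
          ENNReal.rpow_le_rpow (h1.trans h2) (by norm_num)
      _ = 4 * (a ⊔ b) ^ (2:ℝ) := by
          rw [ENNReal.mul_rpow_of_nonneg _ _ (by norm_num : (0:ℝ) ≤ 2)]
          congr 1
          rw [rpow_two_eq]
          norm_num
      _ ≤ 4 * (a ^ (2:ℝ) + b ^ (2:ℝ)) := by
          gcongr
          rcases le_total a b with h | h
          · rw [sup_eq_right.2 h]; exact le_add_self
          · rw [sup_eq_left.2 h]; exact le_self_add
  calc C (p.prod q) ≤ ∫⁻ z, 4 * ((‖z.1‖₊ : ℝ≥0∞) ^ (2:ℝ) + (‖z.2‖₊ : ℝ≥0∞) ^ (2:ℝ))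
        ∂(p.prod q) := lintegral_mono hbound
    _ < ⊤ := by
        have hmf : Measurable fun x : ℝ => (‖x‖₊ : ℝ≥0∞) ^ (2:ℝ) := by
          simp_rw [rpow_two_eq]
          exact (measurable_nnnorm.coe_nnreal_ennreal).mul
            (measurable_nnnorm.coe_nnreal_ennreal)
        have hz1 : Measurable fun z : ℝ × ℝ => (‖z.1‖₊ : ℝ≥0∞) ^ (2:ℝ) :=
          hmf.comp measurable_fst
        have hz2 : Measurable fun z : ℝ × ℝ => (‖z.2‖₊ : ℝ≥0∞) ^ (2:ℝ) :=
          hmf.comp measurable_snd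
        rw [lintegral_const_mul (f := fun z : ℝ × ℝ => (‖z.1‖₊ : ℝ≥0∞) ^ (2:ℝ) + (‖z.2‖₊ : ℝ≥0∞) ^ (2:ℝ)) _ (hz1.add hz2), lintegral_add_left hz1]
        have e1 : ∫⁻ z : ℝ × ℝ, (‖z.1‖₊ : ℝ≥0∞) ^ (2:ℝ) ∂(p.prod q)
            = ∫⁻ x, (‖x‖₊ : ℝ≥0∞) ^ (2:ℝ) ∂p := by
          rw [← lintegral_map hmf measurable_fst, Measure.map_fst_prod]
          simp
        have e2 : ∫⁻ z : ℝ × ℝ, (‖z.2‖₊ : ℝ≥0∞) ^ (2:ℝ) ∂(p.prod q)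
            = ∫⁻ x, (‖x‖₊ : ℝ≥0∞) ^ (2:ℝ) ∂q := by
          rw [← lintegral_map hmf measurable_snd, Measure.map_snd_prod]
          simp
        rw [e1, e2]
        exact ENNReal.mul_lt_top (by norm_num) (ENNReal.add_lt_top.2 ⟨hp, hq⟩)

end WPaux

/-- The squared 2-Wasserstein distance between product measures on ℝⁿ
(with the Euclidean norm) decomposes across coordinates. -/
theorem wasserstein_product_decomposition
    (n : ℕ) (p q : Fin n → Measure ℝ)
    [∀ i, IsProbabilityMeasure (p i)] [∀ i, IsProbabilityMeasure (q i)]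
    (hpm : ∀ i, ∫⁻ x, (‖x‖₊ : ℝ≥0∞) ^ (2 : ℝ) ∂(p i) < ⊤)
    (hqm : ∀ i, ∫⁻ x, (‖x‖₊ : ℝ≥0∞) ^ (2 : ℝ) ∂(q i) < ⊤) :
    Wp 2 ((Measure.pi p).map toE) ((Measure.pi q).map toE) ^ (2 : ℝ)
      = ∑ i, Wp 2 (p i) (q i) ^ (2 : ℝ) := by
  classical
  simp_rw [WPaux.Wp_two_sq]
  refine le_antisymm ?_ ?_
  · -- upper bound via near-optimal coordinate couplings
    have hfin : ∀ i, WPaux.I (p i) (q i) < ⊤ := fun i =>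
      WPaux.I_lt_top (p i) (q i) (hpm i) (hqm i)
    have hsumfin : (∑ i, WPaux.I (p i) (q i)) ≠ ⊤ :=
      (ENNReal.sum_lt_top.2 fun i _ => hfin i).ne
    refine ENNReal.le_of_forall_pos_le_add fun ε hε hlt => ?_
    rcases Nat.eq_zero_or_pos n with hn | hn
    · subst hn
      have h0 := WPaux.I_le_sum p q (fun _ => (0 : Measure (ℝ × ℝ)))
        (fun i => i.elim0) (fun i => i.elim0)
      simp only [Finset.univ_eq_empty, Finset.sum_empty] at h0 ⊢
      exact h0.trans (by positivity)
    · set δ : ℝ≥0∞ := (ε : ℝ≥0∞) / n with hδ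
      have hδpos : 0 < δ := ENNReal.div_pos (by exact_mod_cast hε.ne') (by simp)
      have hchoice : ∀ i : Fin n, ∃ γ : Measure (ℝ × ℝ),
          (γ.map Prod.fst = p i ∧ γ.map Prod.snd = q i)
            ∧ WPaux.C γ < WPaux.I (p i) (q i) + δ := by
        intro i
        have : WPaux.I (p i) (q i) < WPaux.I (p i) (q i) + δ :=
          ENNReal.lt_add_right (hfin i).ne hδpos.ne'
        rw [WPaux.I] at this
        rw [iInf_lt_iff] at this
        obtain ⟨γ, hγ⟩ := this
        rw [iInf_lt_iff] at hγ
        obtain ⟨hmem, hγlt⟩ := hγ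
        exact ⟨γ, hmem, hγlt⟩
      choose γ hγmem hγlt using hchoice
      have hle := WPaux.I_le_sum p q γ (fun i => (hγmem i).1) (fun i => (hγmem i).2)
      refine hle.trans ?_
      calc ∑ i, WPaux.C (γ i) ≤ ∑ i, (WPaux.I (p i) (q i) + δ) :=
            Finset.sum_le_sum fun i _ => (hγlt i).le
        _ = (∑ i, WPaux.I (p i) (q i)) + n * δ := by
            rw [Finset.sum_add_distrib, Finset.sum_const, Finset.card_univ,
              Fintype.card_fin, nsmul_eq_mul]
        _ ≤ (∑ i, WPaux.I (p i) (q i)) + ε := by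
            gcongr
            rw [hδ]
            exact ENNReal.mul_div_le
  · -- lower bound
    refine le_iInf₂ fun γ hγ => ?_
    exact WPaux.sum_I_le p q γ hγ.1 hγ.2
end

section
/- (Compression of mixtures of multivariate Bernoulli dropout distributions.) Let θ ∈ [0,1], and let b ∈ {0,1}ⁿ be a random binary vector with independent entries satisfying P(b_l = 1) = θ for each l. For c ∈ ℝⁿ let b ⊙ c denote the entrywise product. Let c_1, …, c_N ∈ ℝⁿ, let π be a probability vector in ℝ^N, and define the dropout output distribution d_out = Σ_{i=1}^N π_i · law(b ⊙ c_i). Given an index set I ⊆ {1,…,N} with complement I^c, define the compressed distribution d̄_out = Σ_{i ∈ I^c} π_i δ_{c_i} + Σ_{i ∈ I} π_i · law(b ⊙ c_i), where δ_{c_i} is the Dirac measure at c_i. Then W_2^2( d_out, d̄_out ) ≤ Σ_{i ∈ I^c} π_i (1 − θ) ‖c_i‖². -/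
open MeasureTheory
open scoped ENNReal NNReal

/-- The law of the random binary mask `b ∈ {0,1}ⁿ` with i.i.d. entries,
`P(b_l = 1) = θ`. -/
noncomputable def bernoulliVec (n : ℕ) (θ : ℝ≥0∞) (hθ : θ ≤ 1) :
    Measure (Fin n → Bool) :=
  Measure.pi fun _ => (PMF.bernoulli θ.toNNReal (by simpa using ENNReal.toNNReal_mono ENNReal.one_ne_top hθ)).toMeasure

/-- The law of `b ⊙ c`, the entrywise product of the random binary mask `b`
with the fixed vector `c`. -/
noncomputable def maskLaw (n : ℕ) (θ : ℝ≥0∞) (hθ : θ ≤ 1)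
    (c : EuclideanSpace ℝ (Fin n)) : Measure (EuclideanSpace ℝ (Fin n)) :=
  (bernoulliVec n θ hθ).map (fun b => toE fun l => if b l then ofE c l else 0)

section Aux

variable {n : ℕ} {θ : ℝ≥0∞} {hθ : θ ≤ 1}

lemma maskFun_measurable (c : EuclideanSpace ℝ (Fin n)) :
    Measurable (fun b : Fin n → Bool => toE fun l => if b l then ofE c l else 0) :=
  measurable_of_countable _

instance : IsProbabilityMeasure (bernoulliVec n θ hθ) := by
  unfold bernoulliVec; infer_instance

instance (c : EuclideanSpace ℝ (Fin n)) : IsProbabilityMeasure (maskLaw n θ hθ c) :=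
  Measure.isProbabilityMeasure_map (maskFun_measurable c).aemeasurable

lemma pi_map_eval {ι : Type*} [Fintype ι] {α : ι → Type*} [∀ i, MeasurableSpace (α i)]
    (μ : ∀ i, Measure (α i)) [∀ i, IsProbabilityMeasure (μ i)] (l : ι) :
    (Measure.pi μ).map (Function.eval l) = μ l := by
  classical
  ext s hs
  rw [Measure.map_apply (measurable_pi_apply l) hs]
  have h : Function.eval l ⁻¹' s =
      Set.pi Set.univ (Function.update (fun i => (Set.univ : Set (α i))) l s) := by
    ext b
    simp only [Set.mem_preimage, Set.mem_pi, Set.mem_univ, forall_true_left]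
    constructor
    · intro hb i
      by_cases hi : i = l
      · subst hi; simpa using hb
      · simp [Function.update_of_ne hi]
    · intro hb
      simpa using hb l
  rw [h, Measure.pi_pi]
  rw [Finset.prod_eq_single l (fun b _ hb => by simp [Function.update_of_ne hb]) (by simp)]
  simp

lemma lintegral_bernoulli (g : Bool → ℝ≥0∞) :
    ∫⁻ t, g t ∂(PMF.bernoulli θ.toNNReal (by simpa using ENNReal.toNNReal_mono ENNReal.one_ne_top hθ)).toMeasure = (1 - θ) * g false + θ * g true := by
  rw [lintegral_countable' g, tsum_bool]
  rw [PMF.toMeasure_apply_singleton _ _ (MeasurableSet.singleton _),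
    PMF.toMeasure_apply_singleton _ _ (MeasurableSet.singleton _)]
  have hθt : θ ≠ ⊤ := ne_top_of_le_ne_top ENNReal.one_ne_top hθ
  have key : ∀ b, (PMF.bernoulli θ.toNNReal (by simpa using ENNReal.toNNReal_mono ENNReal.one_ne_top hθ)) b
      = ((cond b θ.toNNReal (1 - θ.toNNReal) : ℝ≥0) : ℝ≥0∞) := fun b => PMF.bernoulli_apply _ b
  rw [key, key]
  simp [mul_comm, ENNReal.coe_sub, ENNReal.coe_toNNReal hθt]

lemma sq_ennnorm (x : EuclideanSpace ℝ (Fin n)) :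
    (‖x‖₊ : ℝ≥0∞) ^ (2 : ℝ) = ENNReal.ofReal (∑ l, (x l) ^ 2) := by
  have h2 : ((2 : ℝ)) = ((2 : ℕ) : ℝ) := by norm_num
  rw [h2, ENNReal.rpow_natCast, ← ENNReal.ofReal_coe_nnreal, coe_nnnorm, ← ENNReal.ofReal_pow (norm_nonneg _)]
  congr 1
  rw [EuclideanSpace.norm_eq, Real.sq_sqrt (by positivity)]
  simp [Real.norm_eq_abs, sq_abs]

lemma maskLaw_cost (c : EuclideanSpace ℝ (Fin n)) :
    ∫⁻ x, ((‖x - c‖₊ : ℝ≥0∞)) ^ (2 : ℝ) ∂(maskLaw n θ hθ c)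
      = (1 - θ) * (‖c‖₊ : ℝ≥0∞) ^ (2 : ℝ) := by
  have hm : Measurable fun x : EuclideanSpace ℝ (Fin n) => ((‖x - c‖₊ : ℝ≥0∞)) ^ (2 : ℝ) := by
    fun_prop
  rw [maskLaw, lintegral_map hm (maskFun_measurable c)]
  have hpt : ∀ b : Fin n → Bool,
      ((‖(toE fun l => if b l then ofE c l else 0) - c‖₊ : ℝ≥0∞)) ^ (2 : ℝ)
        = ∑ l, (if b l then 0 else ENNReal.ofReal ((c l) ^ 2)) := by
    intro b
    rw [sq_ennnorm]
    rw [ENNReal.ofReal_sum_of_nonneg (fun l _ => by positivity)]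
    refine Finset.sum_congr rfl fun l _ => ?_
    have : ((toE fun l => if b l then ofE c l else 0) - c) l
        = (if b l then c l else 0) - c l := rfl
    rw [this]
    by_cases hb : b l <;> simp [hb]
  simp_rw [hpt]
  rw [lintegral_finset_sum _ (fun l _ => measurable_of_countable _)]
  have hcoord : ∀ l, ∫⁻ b, (if b l then 0 else ENNReal.ofReal ((c l) ^ 2)) ∂(bernoulliVec n θ hθ)
      = (1 - θ) * ENNReal.ofReal ((c l) ^ 2) := by
    intro l
    have : ∫⁻ b, (if b l then 0 else ENNReal.ofReal ((c l) ^ 2)) ∂(bernoulliVec n θ hθ)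
        = ∫⁻ t, (if t then 0 else ENNReal.ofReal ((c l) ^ 2))
            ∂((bernoulliVec n θ hθ).map (Function.eval l)) := by
      rw [lintegral_map (measurable_of_countable _) (measurable_pi_apply l)]
    rw [this, bernoulliVec, pi_map_eval, lintegral_bernoulli (hθ := hθ)]
    simp
  simp_rw [hcoord]
  rw [← Finset.mul_sum, ← ENNReal.ofReal_sum_of_nonneg (fun l _ => by positivity), ← sq_ennnorm c]

lemma map_sum_smul {E F : Type*} [MeasurableSpace E] [MeasurableSpace F]
    {ι : Type*} (s : Finset ι) (k : ι → ℝ≥0∞) (ν : ι → Measure E)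
    {g : E → F} (hg : Measurable g) :
    (∑ i ∈ s, k i • ν i).map g = ∑ i ∈ s, k i • (ν i).map g := by
  classical
  induction s using Finset.induction with
  | empty => simp
  | insert a s h ih =>
      rw [Finset.sum_insert h, Measure.map_add _ _ hg, Measure.map_smul, ih, Finset.sum_insert h]

end Aux

/-- Compression of mixtures of multivariate Bernoulli dropout distributions:
replacing the components indexed by `Iᶜ` with Dirac measures at their centers
costs at most `Σ_{i ∈ Iᶜ} π_i (1 − θ) ‖c_i‖²` in squared 2-Wasserstein
distance. -/
theorem dropout_compression_bound
    (n N : ℕ) (θ : ℝ≥0∞) (hθ : θ ≤ 1)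
    (c : Fin N → EuclideanSpace ℝ (Fin n))
    (π : Fin N → ℝ≥0) (hπ : ∑ i, π i = 1)
    (I : Finset (Fin N)) :
    Wp 2 (∑ i, (π i : ℝ≥0∞) • maskLaw n θ hθ (c i))
        ((∑ i ∈ Iᶜ, (π i : ℝ≥0∞) • Measure.dirac (c i)) +
          ∑ i ∈ I, (π i : ℝ≥0∞) • maskLaw n θ hθ (c i)) ^ (2 : ℝ)
      ≤ ∑ i ∈ Iᶜ, (π i : ℝ≥0∞) * (1 - θ) * (‖c i‖₊ : ℝ≥0∞) ^ (2 : ℝ) := by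
  classical
  set μ := fun i => maskLaw n θ hθ (c i) with hμdef
  set γ : Measure (EuclideanSpace ℝ (Fin n) × EuclideanSpace ℝ (Fin n)) :=
    (∑ i ∈ Iᶜ, (π i : ℝ≥0∞) • (μ i).map (fun x => (x, c i))) +
      ∑ i ∈ I, (π i : ℝ≥0∞) • (μ i).map (fun x => (x, x)) with hγdef
  have hm : Measurable fun z : EuclideanSpace ℝ (Fin n) × EuclideanSpace ℝ (Fin n) => ((‖z.1 - z.2‖₊ : ℝ≥0∞)) ^ (2 : ℝ) := by fun_prop
  have hfst : γ.map Prod.fst = ∑ i, (π i : ℝ≥0∞) • μ i := by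
    rw [hγdef, Measure.map_add _ _ measurable_fst, map_sum_smul _ _ _ measurable_fst,
      map_sum_smul _ _ _ measurable_fst]
    have h1 : ∀ i, ((μ i).map (fun x => (x, c i))).map Prod.fst = μ i := fun i => by
      rw [Measure.map_map measurable_fst (show Measurable fun x : EuclideanSpace ℝ (Fin n) => (x, c i) from measurable_id.prodMk measurable_const)]
      exact Measure.map_id
    have h2 : ∀ i, ((μ i).map (fun x => (x, x))).map Prod.fst = μ i := fun i => by
      rw [Measure.map_map measurable_fst (show Measurable fun x : EuclideanSpace ℝ (Fin n) => (x, x) from measurable_id.prodMk measurable_id)]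
      exact Measure.map_id
    simp_rw [h1, h2]
    exact Finset.sum_compl_add_sum I _
  have hsnd : γ.map Prod.snd =
      (∑ i ∈ Iᶜ, (π i : ℝ≥0∞) • Measure.dirac (c i)) +
        ∑ i ∈ I, (π i : ℝ≥0∞) • μ i := by
    rw [hγdef, Measure.map_add _ _ measurable_snd, map_sum_smul _ _ _ measurable_snd,
      map_sum_smul _ _ _ measurable_snd]
    have h1 : ∀ i, ((μ i).map (fun x => (x, c i))).map Prod.snd = Measure.dirac (c i) := fun i => by
      rw [Measure.map_map measurable_snd (show Measurable fun x : EuclideanSpace ℝ (Fin n) => (x, c i) from measurable_id.prodMk measurable_const)]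
      show (μ i).map (fun _ => c i) = _
      rw [Measure.map_const]; simp
    have h2 : ∀ i, ((μ i).map (fun x => (x, x))).map Prod.snd = μ i := fun i => by
      rw [Measure.map_map measurable_snd (show Measurable fun x : EuclideanSpace ℝ (Fin n) => (x, x) from measurable_id.prodMk measurable_id)]
      exact Measure.map_id
    simp_rw [h1, h2]
  have hWsq : Wp 2 (∑ i, (π i : ℝ≥0∞) • μ i)
      ((∑ i ∈ Iᶜ, (π i : ℝ≥0∞) • Measure.dirac (c i)) +
        ∑ i ∈ I, (π i : ℝ≥0∞) • μ i) ^ (2 : ℝ)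
      = ⨅ γ' ∈ {γ' : Measure (EuclideanSpace ℝ (Fin n) × EuclideanSpace ℝ (Fin n)) | γ'.map Prod.fst = ∑ i, (π i : ℝ≥0∞) • μ i ∧
          γ'.map Prod.snd = (∑ i ∈ Iᶜ, (π i : ℝ≥0∞) • Measure.dirac (c i)) +
            ∑ i ∈ I, (π i : ℝ≥0∞) • μ i},
        ∫⁻ z, (‖z.1 - z.2‖₊ : ENNReal) ^ (2:ℝ) ∂γ' := by
    rw [Wp, ← ENNReal.rpow_mul]
    norm_num
  rw [hWsq]
  refine le_trans (iInf₂_le γ ⟨hfst, hsnd⟩) ?_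
  rw [hγdef, lintegral_add_measure, lintegral_finset_sum_measure, lintegral_finset_sum_measure]
  have hI : ∀ i ∈ I, ∫⁻ z, ((‖z.1 - z.2‖₊ : ℝ≥0∞)) ^ (2:ℝ)
      ∂((π i : ℝ≥0∞) • (μ i).map (fun x => (x, x))) = 0 := by
    intro i _
    rw [lintegral_smul_measure, lintegral_map hm (show Measurable fun x : EuclideanSpace ℝ (Fin n) => (x, x) from measurable_id.prodMk measurable_id)]
    simp [ENNReal.rpow_two]
  rw [Finset.sum_eq_zero hI, add_zero]
  refine le_of_eq (Finset.sum_congr rfl fun i _ => ?_)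
  rw [lintegral_smul_measure, lintegral_map hm (show Measurable fun x : EuclideanSpace ℝ (Fin n) => (x, c i) from measurable_id.prodMk measurable_const)]
  simp only []
  rw [maskLaw_cost (c i)]
  ring
end
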